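/- arXiv:1404.0814 — 7 statements merged into one kernel-verified Lean document; each statement's English description precedes it below -/
import Mathlib

section
/- For every natural number k ≥ 1, the central binomial coefficient C(2k,k) = (2k)!/(k!)^2 satisfies C(2k,k) ≤ 4^k/√(πk). -/
/-!
Writing `n! = s n · √(2n) · (n/e)^n` with Stirling's sequence `s`, the factors `(n/e)^n` cancel
in `(2k)!/(k!)²`, leaving `C(2k,k) = s(2k)/s(k)² · 4^k/√k`. Since `s` decreases to its limit `√π`,
`s(2k) ≤ s(k)` and `√π ≤ s(k)`, so `s(2k)/s(k)² ≤ 1/s(k) ≤ 1/√π`.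
-/

open Real

namespace Stirling

open Nat

theorem stirlingSeq_antitoneOn : AntitoneOn stirlingSeq (Set.Ici 1) := by
  rintro (_ | m) hm (_ | n) hn hmn
  · simp at hm
  · simp at hm
  · simp at hn
  · exact stirlingSeq'_antitone (succ_le_succ_iff.mp hmn)

theorem centralBinom_eq_stirlingSeq {k : ℕ} (hk : k ≠ 0) :
    (centralBinom k : ℝ) = stirlingSeq (2 * k) / stirlingSeq k ^ 2 * (4 ^ k / √k) := by
  rw [centralBinom_eq_two_mul_choose, cast_choose ℝ (by omega), show 2 * k - k = k by omega,
    stirlingSeq, stirlingSeq]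
  push_cast
  rw [show (2 : ℝ) * (2 * k) = 2 ^ 2 * k by ring, sqrt_mul (by positivity),
    sqrt_mul (by positivity), sqrt_sq zero_le_two, mul_div_assoc, mul_pow, pow_mul, pow_mul]
  have hk : 0 < √(k : ℝ) := by positivity
  field_simp
  rw [sq_sqrt zero_le_two]
  ring

theorem stirlingSeq_two_mul_div_sq_le {k : ℕ} (hk : k ≠ 0) :
    stirlingSeq (2 * k) / stirlingSeq k ^ 2 ≤ 1 / √π := by
  have hπ : √π ≤ stirlingSeq k := sqrt_pi_le_stirlingSeq hk
  have hpos : 0 < stirlingSeq k := (sqrt_pos.mpr pi_pos).trans_le hπ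
  have hmono : stirlingSeq (2 * k) ≤ stirlingSeq k :=
    stirlingSeq_antitoneOn (Set.mem_Ici.mpr (one_le_iff_ne_zero.mpr hk))
      (Set.mem_Ici.mpr (by omega)) (by omega)
  calc stirlingSeq (2 * k) / stirlingSeq k ^ 2
      ≤ stirlingSeq k / stirlingSeq k ^ 2 := by gcongr
    _ = 1 / stirlingSeq k := by field_simp
    _ ≤ 1 / √π := one_div_le_one_div_of_le (sqrt_pos.mpr pi_pos) hπ

end Stirling

theorem centralBinom_upper_bound (k : ℕ) (hk : 1 ≤ k) :
    (Nat.centralBinom k : ℝ) ≤ (4 : ℝ) ^ k / Real.sqrt (Real.pi * k) := by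
  have hk₀ : k ≠ 0 := Nat.one_le_iff_ne_zero.mp hk
  calc (Nat.centralBinom k : ℝ)
      = Stirling.stirlingSeq (2 * k) / Stirling.stirlingSeq k ^ 2 * (4 ^ k / √k) :=
        Stirling.centralBinom_eq_stirlingSeq hk₀
    _ ≤ 1 / √π * (4 ^ k / √k) :=
        mul_le_mul_of_nonneg_right (Stirling.stirlingSeq_two_mul_div_sq_le hk₀) (by positivity)
    _ = 4 ^ k / √(π * k) := by
        rw [sqrt_mul pi_pos.le]
        ring
end

section
/- Let s ∈ [0,1), C, R > 0, α ≥ 0, and let (a_k) be a complex sequence with |a_k| ≤ C · (k!)^s / (R^k · k^α) for all k ≥ 1 (and |a_0| ≤ C). Then the power series f(x) = Σ_{k≥0} a_k x^k / k! converges for all real x, and for every L > 0 there exist constants C' > 0 and R' > 0 such that for all m ≥ 0 and all x ∈ [−L, L], |f^(m)(x)| ≤ C' · (m!)^s / (R'^m). In particular f is Gevrey of order s on [−L, L]. -/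
/-!
Since `k ^ α ≥ 1`, the coefficients satisfy `‖a n‖ ≤ C (n!)^s / R^n`. By `(n+m)! ≤ 2^(n+m) n! m!`,
the shifted sequence `a (· + m)` satisfies a bound of the same kind, with constant
`C (m!)^s / (R/2^s)^m` and radius `R/2^s`. For `|x| ≤ r` the series `∑ b_k x^k / k!` of any such
sequence is dominated termwise by `C ((r/R)^k (k!)^(s-1))`, which is summable because `s < 1`.
Termwise differentiation therefore gives `f^(m)(x) = ∑ a_(k+m) x^k / k!`, and on `[-L, L]` the
dominating series bounds it by `C T (m!)^s / (R/2^s)^m`, where `T` does not depend on `m`.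
-/

open Real Set

open scoped Nat

theorem Nat.factorial_add_le_two_pow_mul (n m : ℕ) : (n + m)! ≤ 2 ^ (n + m) * n ! * m ! := by
  rw [← Nat.add_choose_mul_factorial_mul_factorial n m, mul_assoc, mul_assoc]
  gcongr
  exact Nat.choose_le_two_pow _ _

theorem factorial_add_rpow_le {s : ℝ} (hs : 0 ≤ s) (n m : ℕ) :
    ((n + m)! : ℝ) ^ s ≤ (2 ^ s) ^ (n + m) * (n ! : ℝ) ^ s * (m ! : ℝ) ^ s := by
  calc ((n + m)! : ℝ) ^ s ≤ ((2 : ℝ) ^ (n + m) * n ! * m !) ^ s := by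
        gcongr
        exact_mod_cast Nat.factorial_add_le_two_pow_mul n m
    _ = (2 ^ s) ^ (n + m) * (n ! : ℝ) ^ s * (m ! : ℝ) ^ s := by
        rw [mul_rpow (by positivity) (by positivity), mul_rpow (by positivity) (by positivity),
          rpow_pow_comm zero_le_two]

theorem summable_pow_mul_factorial_rpow {s : ℝ} (hs : s < 1) (q : ℝ) :
    Summable fun k : ℕ => q ^ k * (k ! : ℝ) ^ (s - 1) := by
  rcases eq_or_ne q 0 with rfl | hq
  · exact (hasSum_single 0 fun k hk => by simp [zero_pow hk]).summable
  refine summable_of_ratio_test_tendsto_lt_one zero_lt_one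
    (.of_forall fun k => by positivity) ?_
  have hratio : ∀ k : ℕ, ‖q ^ (k + 1) * ((k + 1)! : ℝ) ^ (s - 1)‖ / ‖q ^ k * (k ! : ℝ) ^ (s - 1)‖
      = |q| * ((k : ℝ) + 1) ^ (-(1 - s)) := by
    intro k
    rw [Nat.factorial_succ, Nat.cast_mul, mul_rpow (by positivity) (by positivity)]
    simp only [norm_mul, norm_pow, Real.norm_eq_abs, abs_of_pos (rpow_pos_of_pos
      (Nat.cast_pos.2 (Nat.factorial_pos _)) _), abs_of_pos (rpow_pos_of_pos
      (Nat.cast_pos.2 k.succ_pos) _)]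
    push_cast
    rw [neg_sub]
    field_simp
    ring
  simp_rw [hratio]
  simpa using ((tendsto_rpow_neg_atTop (sub_pos.2 hs)).comp
    (Filter.tendsto_atTop_add_const_right _ 1 tendsto_natCast_atTop_atTop)).const_mul |q|

noncomputable def egf (a : ℕ → ℂ) (x : ℝ) : ℂ := ∑' k, a k * (x : ℂ) ^ k / (k ! : ℂ)

section GevreyCoefficients

variable {s C R : ℝ} {a : ℕ → ℂ}

theorem norm_shift_le (hs : 0 ≤ s) (hR : 0 < R) (ha : ∀ n, ‖a n‖ ≤ C * (n ! : ℝ) ^ s / R ^ n)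
    (m n : ℕ) :
    ‖a (n + m)‖ ≤ C * (m ! : ℝ) ^ s / (R / 2 ^ s) ^ m * (n ! : ℝ) ^ s / (R / 2 ^ s) ^ n := by
  have hC : 0 ≤ C := by simpa using (norm_nonneg _).trans (ha 0)
  calc ‖a (n + m)‖ ≤ C * ((n + m)! : ℝ) ^ s / R ^ (n + m) := ha _
    _ ≤ C * ((2 ^ s) ^ (n + m) * (n ! : ℝ) ^ s * (m ! : ℝ) ^ s) / R ^ (n + m) := by
        gcongr
        exact factorial_add_rpow_le hs n m
    _ = C * (m ! : ℝ) ^ s / (R / 2 ^ s) ^ m * (n ! : ℝ) ^ s / (R / 2 ^ s) ^ n := by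
        have : (2 : ℝ) ^ s ≠ 0 := by positivity
        rw [div_pow, div_pow]
        field_simp
        ring

theorem norm_egf_term_le (ha : ∀ n, ‖a n‖ ≤ C * (n ! : ℝ) ^ s / R ^ n)
    {r x : ℝ} (hx : |x| ≤ r) (k : ℕ) :
    ‖a k * (x : ℂ) ^ k / (k ! : ℂ)‖ ≤ C * ((r / R) ^ k * (k ! : ℝ) ^ (s - 1)) := by
  have hk : (k ! : ℝ) ≠ 0 := by positivity
  calc ‖a k * (x : ℂ) ^ k / (k ! : ℂ)‖ = ‖a k‖ * |x| ^ k / k ! := by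
        rw [norm_div, norm_mul, norm_pow, Complex.norm_real, Complex.norm_natCast, Real.norm_eq_abs]
    _ ≤ C * (k ! : ℝ) ^ s / R ^ k * r ^ k / k ! := by
        gcongr
        · exact (norm_nonneg _).trans (ha k)
        · exact ha k
    _ = C * ((r / R) ^ k * (k ! : ℝ) ^ (s - 1)) := by
        rw [rpow_sub_one hk, div_pow]
        ring

theorem summable_egf_term (hs : s < 1) (ha : ∀ n, ‖a n‖ ≤ C * (n ! : ℝ) ^ s / R ^ n) (x : ℝ) :
    Summable fun k => a k * (x : ℂ) ^ k / (k ! : ℂ) :=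
  .of_norm_bounded ((summable_pow_mul_factorial_rpow hs _).mul_left C)
    (norm_egf_term_le ha le_rfl)

theorem norm_egf_le (hs : s < 1) (ha : ∀ n, ‖a n‖ ≤ C * (n ! : ℝ) ^ s / R ^ n)
    {r x : ℝ} (hx : |x| ≤ r) :
    ‖egf a x‖ ≤ C * ∑' k : ℕ, (r / R) ^ k * (k ! : ℝ) ^ (s - 1) := by
  rw [← tsum_mul_left]
  exact tsum_of_norm_bounded ((summable_pow_mul_factorial_rpow hs _).mul_left C).hasSum
    (norm_egf_term_le ha hx)

theorem hasDerivAt_monomial_div_factorial (c : ℂ) (k : ℕ) (y : ℝ) :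
    HasDerivAt (fun z : ℝ => c * (z : ℂ) ^ (k + 1) / ((k + 1)! : ℂ))
      (c * (y : ℂ) ^ k / (k ! : ℂ)) y := by
  refine ((((hasDerivAt_pow (k + 1) (y : ℂ)).comp_ofReal).const_mul c).div_const
    ((k + 1)! : ℂ)).congr_deriv ?_
  rw [Nat.factorial_succ]
  push_cast
  field_simp

theorem hasDerivAt_egf (hs0 : 0 ≤ s) (hs1 : s < 1) (hR : 0 < R)
    (ha : ∀ n, ‖a n‖ ≤ C * (n ! : ℝ) ^ s / R ^ n) (x : ℝ) :
    HasDerivAt (egf a) (egf (fun n => a (n + 1)) x) x := by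
  -- With `a 0` split off, the `k`-th term differentiates to the `k`-th term of the shifted series.
  have hsplit :
      egf a = fun y : ℝ => a 0 + ∑' k, a (k + 1) * (y : ℂ) ^ (k + 1) / ((k + 1)! : ℂ) := by
    funext y
    simp [egf, (summable_egf_term hs1 ha y).tsum_eq_zero_add]
  rw [hsplit]
  refine .const_add _ ?_
  set r := |x| + 1
  have hx : x ∈ Metric.ball 0 r := by simp [r]
  refine hasDerivAt_tsum_of_isPreconnected
    ((summable_pow_mul_factorial_rpow hs1 (r / (R / 2 ^ s))).mul_left _)
    (Metric.isOpen_ball (x := (0 : ℝ))) (convex_ball 0 r).isPreconnected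
    (fun k y _ => hasDerivAt_monomial_div_factorial _ k y)
    (fun k y hy => norm_egf_term_le (norm_shift_le hs0 hR ha 1) ?_ k)
    hx ((summable_nat_add_iff 1).2 (summable_egf_term hs1 ha x)) hx
  simpa using (mem_ball_zero_iff.1 hy).le

theorem iteratedDeriv_egf (hs0 : 0 ≤ s) (hs1 : s < 1) (hR : 0 < R)
    (ha : ∀ n, ‖a n‖ ≤ C * (n ! : ℝ) ^ s / R ^ n) (m : ℕ) :
    iteratedDeriv m (egf a) = egf (fun n => a (n + m)) := by
  induction m with
  | zero => rfl
  | succ m ih =>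
    rw [iteratedDeriv_succ, ih]
    funext x
    rw [(hasDerivAt_egf hs0 hs1 (by positivity) (norm_shift_le hs0 hR ha m) x).deriv]
    simp only [Nat.add_right_comm _ 1 m]
    rfl

end GevreyCoefficients

theorem norm_le_of_norm_le_div_mul_rpow {s C R α : ℝ} (hR : 0 < R) (hα : 0 ≤ α) {a : ℕ → ℂ}
    (ha0 : ‖a 0‖ ≤ C) (ha : ∀ k : ℕ, 1 ≤ k → ‖a k‖ ≤ C * (k ! : ℝ) ^ s / (R ^ k * (k : ℝ) ^ α))
    (n : ℕ) : ‖a n‖ ≤ C * (n ! : ℝ) ^ s / R ^ n := by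
  rcases n.eq_zero_or_pos with rfl | hn
  · simpa using ha0
  have hC : 0 ≤ C := (norm_nonneg _).trans ha0
  refine (ha n hn).trans (div_le_div_of_nonneg_left (by positivity) (by positivity) ?_)
  exact le_mul_of_one_le_right (by positivity) (one_le_rpow (by exact_mod_cast hn) hα)

theorem gevrey_of_coeff_bound (s C R α : ℝ) (hs0 : 0 ≤ s) (hs1 : s < 1)
    (hC : 0 < C) (hR : 0 < R) (hα : 0 ≤ α) (a : ℕ → ℂ)
    (ha0 : ‖a 0‖ ≤ C)
    (ha : ∀ k : ℕ, 1 ≤ k → ‖a k‖ ≤ C * (Nat.factorial k : ℝ) ^ s / (R ^ k * (k : ℝ) ^ α)) :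
    (∀ x : ℝ, Summable (fun k : ℕ => a k * (x : ℂ) ^ k / (Nat.factorial k : ℂ))) ∧
    ∀ L : ℝ, 0 < L → ∃ C' R' : ℝ, 0 < C' ∧ 0 < R' ∧
      ∀ (m : ℕ) (x : ℝ), x ∈ Icc (-L) L →
        ‖iteratedDeriv m
            (fun x : ℝ => ∑' k : ℕ, a k * (x : ℂ) ^ k / (Nat.factorial k : ℂ)) x‖
          ≤ C' * (Nat.factorial m : ℝ) ^ s / R' ^ m := by
  have hbound := norm_le_of_norm_le_div_mul_rpow hR hα ha0 ha
  refine ⟨summable_egf_term hs1 hbound, fun L hL => ?_⟩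
  set T := ∑' k : ℕ, (L / (R / 2 ^ s)) ^ k * (k ! : ℝ) ^ (s - 1)
  have hT : 1 ≤ T := by
    simpa using (summable_pow_mul_factorial_rpow hs1 _).le_tsum 0 fun k _ => by positivity
  refine ⟨C * T, R / 2 ^ s, by positivity, by positivity, fun m x hx => ?_⟩
  change ‖iteratedDeriv m (egf a) x‖ ≤ _
  rw [iteratedDeriv_egf hs0 hs1 hR hbound]
  calc ‖egf (fun n => a (n + m)) x‖ ≤ C * (m ! : ℝ) ^ s / (R / 2 ^ s) ^ m * T :=
        norm_egf_le hs1 (norm_shift_le hs0 hR hbound m) (abs_le.2 hx)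
    _ = C * T * (m ! : ℝ) ^ s / (R / 2 ^ s) ^ m := by ring
end

section
/- Fix s ∈ [0,2) and R₁ > 0. For every n ≥ 0, the series Σ_{k : 2k+1 ≥ n} (πk)^(s/4) / ( R₁^k · (k + 1/2)^(s/2) · ((2k+1−n)!)^(1−s/2) ) converges; moreover, for any R₂ ∈ (0, √R₁) there exists a constant C > 0 (independent of n) such that this sum is bounded by C · R₂^(−n) · (n!)^(−s/2) · (n!)^(s/2) = C R₂^{−n}, i.e. the sum multiplied by (n!)^{s/2} is at most C (n!)^{s/2} R₂^{−n}. -/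
open Real Nat

/-! Write `m = 2k + 1 - n` and `q = R₂² / R₁ < 1`. Then `R₁⁻ᵏ = R₂ qᵏ R₂⁻ᵐ R₂⁻ⁿ`, and
the factor `R₂⁻ᵐ / (m!)^(1 - s/2)` is bounded uniformly in `m` because `1 - s/2 > 0`, while
`(πk)^(s/4) / (k + 1/2)^(s/2) ≤ π^(s/4)`. Hence the `k`-th term is at most a constant times
`qᵏ R₂⁻ⁿ`, and summing the geometric series in `k` gives the bound. -/

lemma pow_div_factorial_rpow_le_exp {c α : ℝ} (hc : 0 ≤ c) (hα : 0 < α) (m : ℕ) :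
    c ^ m / (m ! : ℝ) ^ α ≤ exp (c ^ α⁻¹) ^ α := by
  have hpow : c ^ m = ((c ^ α⁻¹) ^ m) ^ α := by
    rw [← rpow_natCast (c ^ α⁻¹), ← rpow_mul hc, ← rpow_mul hc, ← rpow_natCast c]
    congr 1
    field_simp
  rw [hpow, ← div_rpow (by positivity) (by positivity)]
  exact rpow_le_rpow (by positivity) (pow_div_factorial_le_exp _ (by positivity) m) hα.le

lemma mul_rpow_div_add_half_rpow_le {a p x : ℝ} (ha : 0 ≤ a) (hp : 0 ≤ p) (hx : 0 ≤ x) :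
    (a * x) ^ p / (x + 1 / 2) ^ (2 * p) ≤ a ^ p := by
  have hx2 : a * x ≤ a * (x + 1 / 2) ^ 2 := mul_le_mul_of_nonneg_left (by nlinarith) ha
  rw [rpow_mul (by positivity), rpow_two, ← div_rpow (by positivity) (by positivity)]
  exact rpow_le_rpow (by positivity) (div_le_of_le_mul₀ (by positivity) ha hx2) hp

lemma summable_and_tsum_le_of_le_geometric {f : ℕ → ℝ} {B q : ℝ} (hf0 : ∀ k, 0 ≤ f k)
    (hf : ∀ k, f k ≤ B * q ^ k) (hq0 : 0 ≤ q) (hq1 : q < 1) :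
    Summable f ∧ ∑' k, f k ≤ B / (1 - q) := by
  have hgeom : Summable (fun k => B * q ^ k) := (summable_geometric_of_lt_one hq0 hq1).mul_left B
  have hsum : Summable f := hgeom.of_nonneg_of_le hf0 hf
  refine ⟨hsum, ?_⟩
  calc ∑' k, f k ≤ ∑' k, B * q ^ k := hsum.tsum_le_tsum hf hgeom
    _ = B / (1 - q) := by rw [tsum_mul_left, tsum_geometric_of_lt_one hq0 hq1, div_eq_mul_inv]

noncomputable def seriesTerm (s R₁ : ℝ) (n k : ℕ) : ℝ :=
  if n ≤ 2 * k + 1 then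
    (π * k) ^ (s / 4) /
      (R₁ ^ k * ((k : ℝ) + 1 / 2) ^ (s / 2) * ((2 * k + 1 - n) ! : ℝ) ^ (1 - s / 2))
  else 0

section seriesTerm

variable {s R₁ : ℝ}

lemma seriesTerm_nonneg (hR₁ : 0 < R₁) (n k : ℕ) : 0 ≤ seriesTerm s R₁ n k := by
  unfold seriesTerm
  split_ifs <;> positivity

lemma seriesTerm_le {R₂ D : ℝ} (hs0 : 0 ≤ s) (hR₁ : 0 < R₁) (hR₂ : 0 < R₂)
    (hD : ∀ m : ℕ, (R₂⁻¹) ^ m / (m ! : ℝ) ^ (1 - s / 2) ≤ D) (n k : ℕ) :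
    seriesTerm s R₁ n k ≤ π ^ (s / 4) * R₂ * D / R₂ ^ n * (R₂ ^ 2 / R₁) ^ k := by
  have hD0 : 0 ≤ D := (div_nonneg (by positivity) (by positivity)).trans (hD 0)
  unfold seriesTerm
  split_ifs with hn
  swap
  · positivity
  set m := 2 * k + 1 - n
  have hm : R₂ ^ m * R₂ ^ n = R₂ * R₂ ^ (2 * k) := by
    rw [← pow_add, Nat.sub_add_cancel hn, pow_succ, mul_comm]
  have hsplit : (R₁ ^ k)⁻¹ = (R₂⁻¹) ^ m * (R₂ / R₂ ^ n * (R₂ ^ 2 / R₁) ^ k) := by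
    rw [div_pow, ← pow_mul, inv_pow]
    field_simp
    linear_combination hm
  have hprefactor : (π * k) ^ (s / 4) / ((k : ℝ) + 1 / 2) ^ (s / 2) ≤ π ^ (s / 4) := by
    rw [show s / 2 = 2 * (s / 4) by ring]
    exact mul_rpow_div_add_half_rpow_le pi_pos.le (by positivity) k.cast_nonneg
  calc (π * k) ^ (s / 4) / (R₁ ^ k * ((k : ℝ) + 1 / 2) ^ (s / 2) * (m ! : ℝ) ^ (1 - s / 2))
      = (π * k) ^ (s / 4) / ((k : ℝ) + 1 / 2) ^ (s / 2) * (R₁ ^ k)⁻¹ /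
          (m ! : ℝ) ^ (1 - s / 2) := by ring
    _ = (π * k) ^ (s / 4) / ((k : ℝ) + 1 / 2) ^ (s / 2) *
          ((R₂⁻¹) ^ m / (m ! : ℝ) ^ (1 - s / 2)) * (R₂ / R₂ ^ n * (R₂ ^ 2 / R₁) ^ k) := by
        rw [hsplit]; ring
    _ ≤ π ^ (s / 4) * D * (R₂ / R₂ ^ n * (R₂ ^ 2 / R₁) ^ k) := by gcongr; exact hD m
    _ = π ^ (s / 4) * R₂ * D / R₂ ^ n * (R₂ ^ 2 / R₁) ^ k := by ring

lemma exists_tsum_seriesTerm_le (hs0 : 0 ≤ s) (hs2 : s < 2) (hR₁ : 0 < R₁) {R₂ : ℝ}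
    (hR₂ : 0 < R₂) (hR₂₁ : R₂ < √R₁) :
    ∃ C, 0 < C ∧ ∀ n, Summable (seriesTerm s R₁ n) ∧ ∑' k, seriesTerm s R₁ n k ≤ C / R₂ ^ n := by
  have hα : 0 < 1 - s / 2 := by linarith
  have hq1 : R₂ ^ 2 / R₁ < 1 := (div_lt_one hR₁).2 ((lt_sqrt hR₂.le).1 hR₂₁)
  have hD := pow_div_factorial_rpow_le_exp (inv_nonneg.2 hR₂.le) hα
  have hq1' := sub_pos.2 hq1
  refine ⟨π ^ (s / 4) * R₂ * exp ((R₂⁻¹) ^ (1 - s / 2)⁻¹) ^ (1 - s / 2) / (1 - R₂ ^ 2 / R₁),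
    by positivity, fun n => ?_⟩
  obtain ⟨hsum, hle⟩ := summable_and_tsum_le_of_le_geometric (seriesTerm_nonneg hR₁ n)
    (seriesTerm_le hs0 hR₁ hR₂ hD n) (by positivity) hq1
  exact ⟨hsum, hle.trans_eq (by ring)⟩

end seriesTerm

theorem summability_estimate (s R₁ : ℝ) (hs0 : 0 ≤ s) (hs2 : s < 2) (hR₁ : 0 < R₁) :
    (∀ n : ℕ, Summable (fun k : ℕ =>
      if n ≤ 2 * k + 1 then
        (Real.pi * k) ^ (s / 4) /
          (R₁ ^ k * ((k : ℝ) + 1 / 2) ^ (s / 2) *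
            (Nat.factorial (2 * k + 1 - n) : ℝ) ^ (1 - s / 2))
      else 0)) ∧
    ∀ R₂ : ℝ, 0 < R₂ → R₂ < Real.sqrt R₁ → ∃ C : ℝ, 0 < C ∧
      ∀ n : ℕ,
        (∑' k : ℕ,
          if n ≤ 2 * k + 1 then
            (Real.pi * k) ^ (s / 4) /
              (R₁ ^ k * ((k : ℝ) + 1 / 2) ^ (s / 2) *
                (Nat.factorial (2 * k + 1 - n) : ℝ) ^ (1 - s / 2))
          else 0) ≤ C / R₂ ^ n := by
  constructor
  · intro n
    have hsqrt := sqrt_pos.2 hR₁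
    obtain ⟨_, -, hC⟩ :=
      exists_tsum_seriesTerm_le hs0 hs2 hR₁ (R₂ := √R₁ / 2) (by positivity) (by linarith)
    exact (hC n).1
  · intro R₂ hR₂ hR₂₁
    obtain ⟨C, hC0, hC⟩ := exists_tsum_seriesTerm_le hs0 hs2 hR₁ hR₂ hR₂₁
    exact ⟨C, hC0, fun n => (hC n).2⟩
end

section
/- Let s ∈ [0,2), M, R > 0, and let y ∈ C^∞([t₁,t₂]; ℂ) satisfy |y^(k)(t)| ≤ M (k!)^s / R^k for all k ≥ 0 and t ∈ [t₁,t₂]. Then for every m, n ≥ 0 the series Σ_{k : 2k+1 ≥ n} x^(2k+1−n)/(2k+1−n)! · (−i)^k · y^(k+m)(t) converges absolutely and uniformly on [t₁,t₂] × [0,1], and there exist constants C, R₁, R₂ > 0 such that its sum is bounded in absolute value by C · (m!)^s / R₁^m · (n!)^(s/2) / R₂^n. -/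
open Real Set Complex

open Filter Function

private lemma choose_le_two_pow' (N q : ℕ) : (N.choose q) ≤ 2 ^ N := by
  rcases le_or_gt q N with h | h
  · calc N.choose q ≤ ∑ i ∈ Finset.range (N+1), N.choose i :=
        Finset.single_le_sum (fun i _ => Nat.zero_le _) (Finset.mem_range.2 (by omega))
    _ = 2 ^ N := Nat.sum_range_choose N
  · rw [Nat.choose_eq_zero_of_lt h]; exact Nat.zero_le _

private lemma factorial_add_le' (k m : ℕ) :
    (((k+m).factorial : ℝ)) ≤ 2^(k+m) * (k.factorial : ℝ) * (m.factorial : ℝ) := by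
  have h : (k+m).choose k * k.factorial * m.factorial = (k+m).factorial := by
    have := Nat.choose_mul_factorial_mul_factorial (Nat.le_add_right k m)
    simpa using this
  have h2 : (k+m).choose k ≤ 2^(k+m) := choose_le_two_pow' _ _
  have : (k+m).factorial ≤ 2^(k+m) * k.factorial * m.factorial := by
    rw [← h]; exact Nat.mul_le_mul_right _ (Nat.mul_le_mul_right _ h2)
  exact_mod_cast this

private lemma sq_factorial_le' (k : ℕ) :
    ((k.factorial : ℝ))^2 ≤ (((2*k+1).factorial : ℝ)) := by
  have h : (2*k).choose k * k.factorial * k.factorial = (2*k).factorial := by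
    have := Nat.choose_mul_factorial_mul_factorial (show k ≤ 2*k by omega)
    simpa [show 2*k-k = k by omega] using this
  have h1 : k.factorial * k.factorial ≤ (2*k).factorial := by
    rw [← h]
    have := Nat.choose_pos (show k ≤ 2*k by omega)
    nlinarith [Nat.factorial_pos k]
  have h2 : (2*k).factorial ≤ (2*k+1).factorial :=
    Nat.factorial_le (by omega)
  have := le_trans h1 h2
  rw [sq]
  exact_mod_cast this

private lemma term_bound {s R : ℝ} (hs0 : 0 ≤ s) (hs2 : s < 2) (hR : 0 < R)
    (m n k : ℕ) (hnk : n ≤ 2*k+1) :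
    (((k+m).factorial : ℝ))^s / (R^(k+m) * (((2*k+1-n).factorial : ℝ)))
    ≤ (2 * ((m.factorial:ℝ)^s * (4/R)^m) * ((n.factorial:ℝ)^(s/2)))
      * ((16/R)^k / (((2*k+1-n).factorial : ℝ))^(1-s/2)) := by
  set j := 2*k+1-n with hj
  have fjpos : (0:ℝ) < (j.factorial : ℝ) := by exact_mod_cast j.factorial_pos
  have fkpos : (0:ℝ) < (k.factorial : ℝ) := by exact_mod_cast k.factorial_pos
  have fmpos : (0:ℝ) < (m.factorial : ℝ) := by exact_mod_cast m.factorial_pos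
  have fnpos : (0:ℝ) < (n.factorial : ℝ) := by exact_mod_cast n.factorial_pos
  -- step 1
  have h1 : (((k+m).factorial : ℝ))^s ≤ 4^(k+m) * (k.factorial:ℝ)^s * (m.factorial:ℝ)^s := by
    calc (((k+m).factorial : ℝ))^s
        ≤ ((2:ℝ)^(k+m) * (k.factorial:ℝ) * (m.factorial:ℝ))^s :=
          Real.rpow_le_rpow (by positivity) (factorial_add_le' k m) hs0
      _ = ((2:ℝ)^(k+m))^s * (k.factorial:ℝ)^s * (m.factorial:ℝ)^s := by
          rw [Real.mul_rpow (by positivity) (by positivity),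
            Real.mul_rpow (by positivity) (by positivity)]
      _ ≤ 4^(k+m) * (k.factorial:ℝ)^s * (m.factorial:ℝ)^s := by
          have h2s : ((2:ℝ)^(k+m))^s = ((2:ℝ)^s)^(k+m) := by
            rw [← Real.rpow_natCast (2:ℝ) (k+m), ← Real.rpow_natCast ((2:ℝ)^s) (k+m),
              ← Real.rpow_mul (by norm_num), ← Real.rpow_mul (by norm_num), mul_comm]
          have h24 : (2:ℝ)^s ≤ 4 := by
            calc (2:ℝ)^s ≤ (2:ℝ)^(2:ℝ) :=
              Real.rpow_le_rpow_of_exponent_le (by norm_num) (le_of_lt hs2)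
            _ = 4 := by
              rw [show (2:ℝ) = ((2:ℕ):ℝ) by norm_num, Real.rpow_natCast]; norm_num
          have : ((2:ℝ)^s)^(k+m) ≤ (4:ℝ)^(k+m) :=
            pow_le_pow_left₀ (Real.rpow_nonneg (by norm_num) s) h24 _
          rw [h2s]
          exact mul_le_mul_of_nonneg_right (mul_le_mul_of_nonneg_right this
            (Real.rpow_nonneg (by positivity) s)) (Real.rpow_nonneg (by positivity) s)
  -- step 2
  have h2 : (k.factorial:ℝ)^s ≤ (((2*k+1).factorial : ℝ))^(s/2) := by
    have : (k.factorial:ℝ)^s = ((k.factorial:ℝ)^(2:ℕ))^(s/2) := by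
      rw [← Real.rpow_natCast ((k.factorial:ℝ)) 2, ← Real.rpow_mul (le_of_lt fkpos)]
      norm_num
      congr 1
      ring
    rw [this]
    exact Real.rpow_le_rpow (by positivity) (sq_factorial_le' k) (by linarith)
  -- step 3
  have h3 : (((2*k+1).factorial : ℝ))^(s/2)
      ≤ 2^(2*k+1) * (n.factorial:ℝ)^(s/2) * (j.factorial:ℝ)^(s/2) := by
    have hdecomp : ((2*k+1).factorial : ℝ) ≤ 2^(2*k+1) * (n.factorial:ℝ) * (j.factorial:ℝ) := by
      have h := Nat.choose_mul_factorial_mul_factorial hnk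
      have hc : (2*k+1).choose n ≤ 2^(2*k+1) := choose_le_two_pow' _ _
      have : (2*k+1).factorial ≤ 2^(2*k+1) * n.factorial * j.factorial := by
        rw [← h]; exact Nat.mul_le_mul_right _ (Nat.mul_le_mul_right _ hc)
      exact_mod_cast this
    calc (((2*k+1).factorial : ℝ))^(s/2)
        ≤ ((2:ℝ)^(2*k+1) * (n.factorial:ℝ) * (j.factorial:ℝ))^(s/2) :=
          Real.rpow_le_rpow (by positivity) hdecomp (by linarith)
      _ = ((2:ℝ)^(2*k+1))^(s/2) * (n.factorial:ℝ)^(s/2) * (j.factorial:ℝ)^(s/2) := by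
          rw [Real.mul_rpow (by positivity) (by positivity),
            Real.mul_rpow (by positivity) (by positivity)]
      _ ≤ 2^(2*k+1) * (n.factorial:ℝ)^(s/2) * (j.factorial:ℝ)^(s/2) := by
          have hb : (1:ℝ) ≤ (2:ℝ)^(2*k+1) := one_le_pow₀ (by norm_num)
          have : ((2:ℝ)^(2*k+1))^(s/2) ≤ (2:ℝ)^(2*k+1) := by
            calc ((2:ℝ)^(2*k+1))^(s/2) ≤ ((2:ℝ)^(2*k+1))^(1:ℝ) :=
              Real.rpow_le_rpow_of_exponent_le hb (by linarith)
            _ = (2:ℝ)^(2*k+1) := Real.rpow_one _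
          exact mul_le_mul_of_nonneg_right (mul_le_mul_of_nonneg_right this
            (Real.rpow_nonneg (by positivity) _)) (Real.rpow_nonneg (by positivity) _)
  -- combine numerator
  have hnum : (((k+m).factorial : ℝ))^s
      ≤ 4^(k+m) * (2^(2*k+1) * (n.factorial:ℝ)^(s/2) * (j.factorial:ℝ)^(s/2))
        * (m.factorial:ℝ)^s := by
    calc (((k+m).factorial : ℝ))^s
        ≤ 4^(k+m) * (k.factorial:ℝ)^s * (m.factorial:ℝ)^s := h1
      _ ≤ 4^(k+m) * (2^(2*k+1) * (n.factorial:ℝ)^(s/2) * (j.factorial:ℝ)^(s/2))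
            * (m.factorial:ℝ)^s := by
          have := le_trans h2 h3
          exact mul_le_mul_of_nonneg_right (mul_le_mul_of_nonneg_left this (by positivity))
            (Real.rpow_nonneg (by positivity) s)
  have hjsplit : (j.factorial:ℝ)^(s/2) = (j.factorial:ℝ) / (j.factorial:ℝ)^(1-s/2) := by
    rw [eq_div_iff (ne_of_gt (Real.rpow_pos_of_pos fjpos _)), ← Real.rpow_add fjpos,
      show s/2 + (1-s/2) = 1 by ring, Real.rpow_one]
  have hP : (0:ℝ) < (j.factorial:ℝ)^(1-s/2) := Real.rpow_pos_of_pos fjpos _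
  calc (((k+m).factorial : ℝ))^s / (R^(k+m) * ((j.factorial : ℝ)))
      ≤ (4^(k+m) * (2^(2*k+1) * (n.factorial:ℝ)^(s/2) * (j.factorial:ℝ)^(s/2))
          * (m.factorial:ℝ)^s) / (R^(k+m) * ((j.factorial : ℝ))) := by
        gcongr
    _ = (2 * ((m.factorial:ℝ)^s * (4/R)^m) * ((n.factorial:ℝ)^(s/2)))
        * ((16/R)^k / (((j.factorial : ℝ)))^(1-s/2)) := by
        rw [hjsplit, pow_add (4:ℝ) k m, pow_add R k m, div_pow, div_pow,
          show (16:ℝ) = 4*4 by norm_num, mul_pow,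
          pow_succ (2:ℝ) (2*k), pow_mul]
        field_simp
        ring


private lemma g_summable {b ε : ℝ} (hb : 0 < b) (hε : 0 < ε) :
    Summable (fun j : ℕ => b^j / ((j.factorial : ℝ))^ε) := by
  apply summable_of_ratio_norm_eventually_le (r := 1/2) (by norm_num)
  have htend : Tendsto (fun j : ℕ => ((j:ℝ)+1)^ε) atTop atTop := by
    apply (tendsto_rpow_atTop hε).comp
    exact tendsto_atTop_add_const_right atTop 1 tendsto_natCast_atTop_atTop
  filter_upwards [htend.eventually_ge_atTop (2*b)] with j hjb
  have fjpos : (0:ℝ) < (j.factorial : ℝ) := by exact_mod_cast j.factorial_pos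
  have hfe : ((j.factorial:ℝ))^ε > 0 := Real.rpow_pos_of_pos fjpos _
  have hsucc : (((j+1).factorial : ℝ))^ε = ((j:ℝ)+1)^ε * ((j.factorial:ℝ))^ε := by
    rw [Nat.factorial_succ, Nat.cast_mul, Real.mul_rpow (by positivity) (by positivity)]
    push_cast
    ring_nf
  have h1pos : (0:ℝ) < ((j:ℝ)+1)^ε := Real.rpow_pos_of_pos (by positivity) _
  rw [Real.norm_of_nonneg (by positivity), Real.norm_of_nonneg (by positivity), hsucc]
  rw [div_le_iff₀ (by positivity), pow_succ]
  have : b ≤ ((j:ℝ)+1)^ε / 2 := by linarith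
  calc b^j * b ≤ b^j * (((j:ℝ)+1)^ε / 2) := by
        exact mul_le_mul_of_nonneg_left this (by positivity)
    _ = 1/2 * (b^j / ((j.factorial:ℝ))^ε) * (((j:ℝ)+1)^ε * ((j.factorial:ℝ))^ε) := by
        field_simp

private lemma pow_le_max_mul_pow {b : ℝ} (hb : 0 < b) {p q : ℕ} (h1 : p ≤ q) (h2 : q ≤ p + 1) :
    b^p ≤ max 1 b⁻¹ * b^q := by
  rcases eq_or_lt_of_le h1 with rfl | hlt
  · nlinarith [pow_pos hb p, le_max_left (1:ℝ) b⁻¹]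
  · have hq : q = p + 1 := by omega
    subst hq
    have : b⁻¹ ≤ max 1 b⁻¹ := le_max_right _ _
    calc b^p = b⁻¹ * b^(p+1) := by field_simp [pow_succ]; ring
      _ ≤ max 1 b⁻¹ * b^(p+1) := mul_le_mul_of_nonneg_right this (by positivity)

private lemma h_bound {b ε : ℝ} (hb : 0 < b) (hε : 0 < ε) (n : ℕ) :
    Summable (fun k : ℕ => if n ≤ 2*k+1 then (b^2)^k / (((2*k+1-n).factorial : ℝ))^ε else 0)
    ∧ ∑' k : ℕ, (if n ≤ 2*k+1 then (b^2)^k / (((2*k+1-n).factorial : ℝ))^ε else 0)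
      ≤ ((max 1 b⁻¹)^2 * ∑' j : ℕ, b^j / ((j.factorial : ℝ))^ε) * b^n := by
  set g : ℕ → ℝ := fun j => b^j / ((j.factorial : ℝ))^ε with hg
  set h : ℕ → ℝ := fun k => if n ≤ 2*k+1 then (b^2)^k / (((2*k+1-n).factorial : ℝ))^ε else 0
    with hh
  have hgsum : Summable g := g_summable hb hε
  have hgpos : ∀ j, 0 < g j := fun j => by
    have : (0:ℝ) < (j.factorial:ℝ) := by exact_mod_cast j.factorial_pos
    positivity
  set c : ℕ := 2*(n/2)+1-n with hc
  set i : ℕ → ℕ := fun l => n/2 + l with hi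
  have hinj : Function.Injective i := fun a b hab => by simpa [hi] using hab
  have hrange : ∀ k, k ∉ Set.range i → h k = 0 := by
    intro k hk
    have : k < n/2 := by
      by_contra hcon
      exact hk ⟨k - n/2, by simp [hi]; omega⟩
    simp only [hh]
    rw [if_neg (by omega)]
  have hkey : ∀ l : ℕ, h (i l) ≤ (max 1 b⁻¹)^2 * b^n * g (2*l+c) := by
    intro l
    have hcond : n ≤ 2*(n/2+l)+1 := by omega
    have hjeq : 2*(n/2+l)+1-n = 2*l+c := by omega
    simp only [hh, hi, if_pos hcond, hjeq]
    have hbne : (0:ℝ) < ((( 2*l+c).factorial:ℝ))^ε :=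
      Real.rpow_pos_of_pos (by exact_mod_cast (2*l+c).factorial_pos) _
    have hpow : (b^2)^(n/2+l) ≤ (max 1 b⁻¹)^2 * b^n * b^(2*l+c) := by
      have e1 : (b^2)^(n/2+l) = b^(2*(n/2)) * b^(2*l) := by
        rw [← pow_mul]
        rw [← pow_add]
        congr 1
        ring
      have e2 : b^(2*(n/2)) ≤ max 1 b⁻¹ * b^n := pow_le_max_mul_pow hb (by omega) (by omega)
      have e3 : b^(2*l) ≤ max 1 b⁻¹ * b^(2*l+c) := pow_le_max_mul_pow hb (by omega) (by omega)
      calc (b^2)^(n/2+l) = b^(2*(n/2)) * b^(2*l) := e1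
        _ ≤ (max 1 b⁻¹ * b^n) * (max 1 b⁻¹ * b^(2*l+c)) := by
            apply mul_le_mul e2 e3 (by positivity)
            positivity
        _ = (max 1 b⁻¹)^2 * b^n * b^(2*l+c) := by ring
    calc (b^2)^(n/2+l) / (((2*l+c).factorial:ℝ))^ε
        ≤ ((max 1 b⁻¹)^2 * b^n * b^(2*l+c)) / (((2*l+c).factorial:ℝ))^ε := by gcongr
      _ = (max 1 b⁻¹)^2 * b^n * g (2*l+c) := by
          simp only [hg]; ring
  have hgcomp : Summable (fun l => g (2*l+c)) := by
    apply hgsum.comp_injective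
    intro a b hab
    simpa using (by omega : 2*a+c = 2*b+c → a = b) hab
  have hhinonneg : ∀ l, 0 ≤ h (i l) := by
    intro l
    simp only [hh]
    split
    · positivity
    · exact le_refl 0
  have hhcompsum : Summable (h ∘ i) := by
    apply Summable.of_nonneg_of_le hhinonneg hkey
    exact (hgcomp.mul_left _)
  have hhsum : Summable h := (hinj.summable_iff hrange).mp hhcompsum
  refine ⟨hhsum, ?_⟩
  have htsum_eq : ∑' l, h (i l) = ∑' k, h k := hinj.tsum_eq (fun k hk => by
    by_contra h'
    exact hk (hrange k h'))
  calc ∑' k, h k = ∑' l, h (i l) := htsum_eq.symm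
    _ ≤ ∑' l, ((max 1 b⁻¹)^2 * b^n * g (2*l+c)) :=
        Summable.tsum_le_tsum hkey hhcompsum (hgcomp.mul_left _)
    _ = (max 1 b⁻¹)^2 * b^n * ∑' l, g (2*l+c) := tsum_mul_left
    _ ≤ (max 1 b⁻¹)^2 * b^n * ∑' j, g j := by
        apply mul_le_mul_of_nonneg_left _ (by positivity)
        exact Summable.tsum_le_tsum_of_inj (fun l => 2*l+c)
          (fun a b hab => by have : 2*a+c = 2*b+c := hab; omega)
          (fun _ _ => le_of_lt (hgpos _)) (fun l => le_rfl) hgcomp hgsum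
    _ = ((max 1 b⁻¹)^2 * ∑' j, g j) * b^n := by ring


theorem prop1_quantitative (s M R t₁ t₂ : ℝ) (hs0 : 0 ≤ s) (hs2 : s < 2)
    (hM : 0 < M) (hR : 0 < R) (ht : t₁ < t₂) (y : ℝ → ℂ)
    (hy : ContDiff ℝ (⊤ : ℕ∞) y)
    (hbd : ∀ (k : ℕ) (t : ℝ), t ∈ Icc t₁ t₂ →
      ‖iteratedDeriv k y t‖ ≤ M * (Nat.factorial k : ℝ) ^ s / R ^ k) :
    (∀ (m n : ℕ) (t x : ℝ), t ∈ Icc t₁ t₂ → x ∈ Icc (0 : ℝ) 1 →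
      Summable (fun k : ℕ =>
        ‖(if n ≤ 2 * k + 1 then
            (x : ℂ) ^ (2 * k + 1 - n) / (Nat.factorial (2 * k + 1 - n) : ℂ) *
              (-Complex.I) ^ k * iteratedDeriv (k + m) y t
          else 0)‖)) ∧
    ∃ C R₁ R₂ : ℝ, 0 < C ∧ 0 < R₁ ∧ 0 < R₂ ∧
      ∀ (m n : ℕ) (t x : ℝ), t ∈ Icc t₁ t₂ → x ∈ Icc (0 : ℝ) 1 →
        ‖∑' k : ℕ,
            (if n ≤ 2 * k + 1 then
              (x : ℂ) ^ (2 * k + 1 - n) / (Nat.factorial (2 * k + 1 - n) : ℂ) *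
                (-Complex.I) ^ k * iteratedDeriv (k + m) y t
            else 0)‖
          ≤ C * ((Nat.factorial m : ℝ) ^ s / R₁ ^ m) *
              ((Nat.factorial n : ℝ) ^ (s / 2) / R₂ ^ n) := by
  set b : ℝ := Real.sqrt (16 / R) with hbdef
  have hb : 0 < b := Real.sqrt_pos.mpr (by positivity)
  have hb2 : b ^ 2 = 16 / R := Real.sq_sqrt (by positivity)
  set ε : ℝ := 1 - s / 2 with hεdef
  have hε : 0 < ε := by simp only [hεdef]; linarith
  -- the key per-term estimate
  have key : ∀ (m n k : ℕ) (t x : ℝ), t ∈ Icc t₁ t₂ → x ∈ Icc (0 : ℝ) 1 →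
      ‖(if n ≤ 2 * k + 1 then
          (x : ℂ) ^ (2 * k + 1 - n) / (Nat.factorial (2 * k + 1 - n) : ℂ) *
            (-Complex.I) ^ k * iteratedDeriv (k + m) y t
        else 0)‖
      ≤ (M * (2 * (((m.factorial : ℝ)) ^ s * (4 / R) ^ m) * (((n.factorial : ℝ)) ^ (s / 2))))
        * (if n ≤ 2 * k + 1 then (b ^ 2) ^ k / (((2 * k + 1 - n).factorial : ℝ)) ^ ε else 0) := by
    intro m n k t x htm hxm
    by_cases hc : n ≤ 2 * k + 1
    · rw [if_pos hc, if_pos hc]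
      have fj : (0 : ℝ) < ((2 * k + 1 - n).factorial : ℝ) := by
        exact_mod_cast (2 * k + 1 - n).factorial_pos
      have hnorm : ‖(x : ℂ) ^ (2 * k + 1 - n) / (Nat.factorial (2 * k + 1 - n) : ℂ) *
            (-Complex.I) ^ k * iteratedDeriv (k + m) y t‖
          = |x| ^ (2 * k + 1 - n) / ((2 * k + 1 - n).factorial : ℝ) *
              ‖iteratedDeriv (k + m) y t‖ := by
        rw [norm_mul, norm_mul, norm_div, norm_pow, norm_pow, norm_neg, Complex.norm_I,
          one_pow, mul_one, Complex.norm_real, Complex.norm_natCast]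
        simp [Real.norm_eq_abs]
      have hx1 : |x| ^ (2 * k + 1 - n) ≤ 1 := by
        apply pow_le_one₀ (abs_nonneg x)
        rw [_root_.abs_of_nonneg hxm.1]
        exact hxm.2
      have step1 : ‖(x : ℂ) ^ (2 * k + 1 - n) / (Nat.factorial (2 * k + 1 - n) : ℂ) *
            (-Complex.I) ^ k * iteratedDeriv (k + m) y t‖
          ≤ M * ((((k + m).factorial : ℝ)) ^ s / (R ^ (k + m) * (((2 * k + 1 - n).factorial : ℝ)))) := by
        rw [hnorm]
        have hD := hbd (k + m) t htm
        have hDnn : (0:ℝ) ≤ ‖iteratedDeriv (k + m) y t‖ := norm_nonneg _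
        calc |x| ^ (2 * k + 1 - n) / ((2 * k + 1 - n).factorial : ℝ) *
              ‖iteratedDeriv (k + m) y t‖
            ≤ 1 / ((2 * k + 1 - n).factorial : ℝ) *
              (M * (((k + m).factorial : ℝ)) ^ s / R ^ (k + m)) := by
              apply mul_le_mul _ hD hDnn (by positivity)
              gcongr
          _ = M * ((((k + m).factorial : ℝ)) ^ s /
                (R ^ (k + m) * (((2 * k + 1 - n).factorial : ℝ)))) := by
              field_simp
      refine step1.trans ?_
      have htb := term_bound hs0 hs2 hR m n k hc
      calc M * ((((k + m).factorial : ℝ)) ^ s /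
              (R ^ (k + m) * (((2 * k + 1 - n).factorial : ℝ))))
          ≤ M * ((2 * ((m.factorial : ℝ) ^ s * (4 / R) ^ m) * ((n.factorial : ℝ) ^ (s / 2)))
              * ((16 / R) ^ k / (((2 * k + 1 - n).factorial : ℝ)) ^ (1 - s / 2))) :=
            mul_le_mul_of_nonneg_left htb (le_of_lt hM)
        _ = (M * (2 * (((m.factorial : ℝ)) ^ s * (4 / R) ^ m) * (((n.factorial : ℝ)) ^ (s / 2))))
              * ((b ^ 2) ^ k / (((2 * k + 1 - n).factorial : ℝ)) ^ ε) := by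
            rw [hb2, hεdef]
            ring
    · rw [if_neg hc, if_neg hc]
      simp
  have hCmn_nonneg : ∀ m n : ℕ,
      (0:ℝ) ≤ M * (2 * (((m.factorial : ℝ)) ^ s * (4 / R) ^ m) * (((n.factorial : ℝ)) ^ (s / 2))) := by
    intro m n
    have h1 : (0:ℝ) ≤ ((m.factorial : ℝ)) ^ s := Real.rpow_nonneg (by positivity) _
    have h2 : (0:ℝ) ≤ ((n.factorial : ℝ)) ^ (s/2) := Real.rpow_nonneg (by positivity) _
    positivity
  have hsumnorm : ∀ (m n : ℕ) (t x : ℝ), t ∈ Icc t₁ t₂ → x ∈ Icc (0 : ℝ) 1 →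
      Summable (fun k : ℕ =>
        ‖(if n ≤ 2 * k + 1 then
            (x : ℂ) ^ (2 * k + 1 - n) / (Nat.factorial (2 * k + 1 - n) : ℂ) *
              (-Complex.I) ^ k * iteratedDeriv (k + m) y t
          else 0)‖) := by
    intro m n t x htm hxm
    exact Summable.of_nonneg_of_le (fun k => norm_nonneg _) (fun k => key m n k t x htm hxm)
      (((h_bound hb hε n).1).mul_left _)
  refine ⟨hsumnorm, ?_⟩
  set D : ℝ := ∑' j : ℕ, b ^ j / ((j.factorial : ℝ)) ^ ε with hDdef
  have hgsum : Summable (fun j : ℕ => b ^ j / ((j.factorial : ℝ)) ^ ε) := g_summable hb hε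
  have hDpos : 0 < D := by
    have h0 : (0:ℝ) < b ^ 0 / (((0:ℕ).factorial : ℝ)) ^ ε := by
      simp [Nat.factorial]
    have hle : b ^ 0 / (((0:ℕ).factorial : ℝ)) ^ ε ≤ D := by
      apply Summable.le_tsum hgsum 0
      intro j _
      have : (0:ℝ) < (j.factorial : ℝ) := by exact_mod_cast j.factorial_pos
      positivity
    linarith
  refine ⟨M * 2 * ((max 1 b⁻¹) ^ 2 * D), R / 4, b⁻¹, by positivity, by positivity,
    by positivity, ?_⟩
  intro m n t x htm hxm
  have hsn := hsumnorm m n t x htm hxm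
  have hhb := h_bound hb hε n
  calc ‖∑' k : ℕ,
        (if n ≤ 2 * k + 1 then
          (x : ℂ) ^ (2 * k + 1 - n) / (Nat.factorial (2 * k + 1 - n) : ℂ) *
            (-Complex.I) ^ k * iteratedDeriv (k + m) y t
        else 0)‖
      ≤ ∑' k : ℕ,
        ‖(if n ≤ 2 * k + 1 then
          (x : ℂ) ^ (2 * k + 1 - n) / (Nat.factorial (2 * k + 1 - n) : ℂ) *
            (-Complex.I) ^ k * iteratedDeriv (k + m) y t
        else 0)‖ := norm_tsum_le_tsum_norm hsn
    _ ≤ ∑' k : ℕ,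
        (M * (2 * (((m.factorial : ℝ)) ^ s * (4 / R) ^ m) * (((n.factorial : ℝ)) ^ (s / 2))))
          * (if n ≤ 2 * k + 1 then (b ^ 2) ^ k / (((2 * k + 1 - n).factorial : ℝ)) ^ ε else 0) :=
        Summable.tsum_le_tsum (fun k => key m n k t x htm hxm) hsn (hhb.1.mul_left _)
    _ = (M * (2 * (((m.factorial : ℝ)) ^ s * (4 / R) ^ m) * (((n.factorial : ℝ)) ^ (s / 2))))
          * ∑' k : ℕ, (if n ≤ 2 * k + 1 then (b ^ 2) ^ k /
              (((2 * k + 1 - n).factorial : ℝ)) ^ ε else 0) := tsum_mul_left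
    _ ≤ (M * (2 * (((m.factorial : ℝ)) ^ s * (4 / R) ^ m) * (((n.factorial : ℝ)) ^ (s / 2))))
          * (((max 1 b⁻¹) ^ 2 * D) * b ^ n) :=
        mul_le_mul_of_nonneg_left hhb.2 (hCmn_nonneg m n)
    _ = M * 2 * ((max 1 b⁻¹) ^ 2 * D) * ((Nat.factorial m : ℝ) ^ s / (R / 4) ^ m) *
          ((Nat.factorial n : ℝ) ^ (s / 2) / (b⁻¹) ^ n) := by
        rw [div_pow, div_pow, inv_pow]
        have hRm : (R:ℝ)^m ≠ 0 := by positivity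
        have h4m : (4:ℝ)^m ≠ 0 := by positivity
        have hbn : b^n ≠ 0 := by positivity
        field_simp
end

section
/- For every t ≠ 0 and every L > 0, the function x ↦ e^{i x²/(4t)} is Gevrey of order 1/2 on [−L, L]: there exist constants C(t,L) > 0 and R = √|t| such that |∂_x^k e^{i x²/(4t)}| ≤ C(t,L) · (k!)^(1/2) / (k^(1/4) · (√|t|)^k) for all k ≥ 1 and x ∈ [−L,L]. -/
/-!
With `c² = -i/(2t)` the kernel is `e^{-(c x)²/2}`, so its `k`-th derivative is
`(-c)^k He_k(c x) e^{-(c x)²/2}`, where `He_k = hermite k` is the probabilists' Hermite polynomial;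
the exponential factor has modulus one. The coefficient of `X^m` in `He_{2j+m}` is
`±(2j-1)‼ C(2j+m, m)`, and the Wallis-type bound `((2j-1)‼)⁴ (2j+1) ≤ ((2j)!)²` gives
`|coeff| Bᵐ ≤ e^{8B⁴} 2⁻ᵐ √(2^k k!) / k^{1/4}`. Summing over `m` with `B = |c| L` and using
`|c| = 1/√(2|t|)` yields the Gevrey bound.
-/

open Real Set Polynomial
open scoped Nat Complex

theorem iteratedDeriv_cexp_neg_sq_half (c : ℂ) (k : ℕ) :
    iteratedDeriv k (fun y : ℝ => cexp (-(c * y) ^ 2 / 2)) =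
      fun y : ℝ => (-c) ^ k * aeval (c * y) (hermite k) * cexp (-(c * y) ^ 2 / 2) := by
  induction k with
  | zero => simp
  | succ k ih =>
    ext y
    rw [iteratedDeriv_succ, ih]
    have hlin : HasDerivAt (fun y : ℝ => c * y) c y := by
      simpa using ((hasDerivAt_id (y : ℂ)).const_mul c).comp_ofReal
    have hpoly : HasDerivAt (fun y : ℝ => aeval (c * y) (hermite k))
        (aeval (c * y) (derivative (hermite k)) * c) y := by
      exact (Polynomial.hasDerivAt_aeval (hermite k) (c * (y : ℂ))).comp y hlin
    have hexponent : HasDerivAt (fun y : ℝ => -(c * y) ^ 2 / 2) (-(c * y) * c) y := by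
      refine ((hlin.fun_pow 2).fun_neg.div_const 2).congr_deriv ?_
      norm_num
      ring
    rw [((hpoly.const_mul ((-c) ^ k)).fun_mul hexponent.cexp).deriv, hermite_succ]
    simp only [map_sub, map_mul, aeval_X]
    ring

theorem norm_aeval_le_sum {A : Type*} [NormedRing A] [NormOneClass A] (p : ℤ[X]) (x : A) :
    ‖aeval x p‖ ≤ ∑ i ∈ Finset.range (p.natDegree + 1), ‖p.coeff i‖ * ‖x‖ ^ i := by
  rw [aeval_eq_sum_range]
  refine (norm_sum_le _ _).trans (Finset.sum_le_sum fun i _ => (norm_zsmul_le _ _).trans ?_)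
  gcongr
  exact norm_pow_le _ _

theorem norm_iteratedDeriv_cexp_neg_sq_half_le {c : ℂ} (hc : (c ^ 2).re = 0) (k : ℕ) {L x : ℝ}
    (hx : |x| ≤ L) :
    ‖iteratedDeriv k (fun y : ℝ => cexp (-(c * y) ^ 2 / 2)) x‖ ≤
      ‖c‖ ^ k * ∑ m ∈ Finset.range (k + 1), ‖(hermite k).coeff m‖ * (‖c‖ * L) ^ m := by
  have hunit : ‖cexp (-(c * x) ^ 2 / 2)‖ = 1 := by
    rw [Complex.norm_exp, mul_pow, ← Complex.ofReal_pow, neg_div, Complex.neg_re,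
      Complex.div_ofNat_re, Complex.re_mul_ofReal, hc]
    simp
  rw [iteratedDeriv_cexp_neg_sq_half, norm_mul, norm_mul, hunit, norm_pow, norm_neg, mul_one]
  gcongr
  refine (norm_aeval_le_sum _ _).trans ?_
  rw [natDegree_hermite]
  gcongr
  rw [norm_mul, Complex.norm_real, Real.norm_eq_abs]
  gcongr

theorem doubleFactorial_pow_four_mul_le (j : ℕ) : (2 * j - 1)‼ ^ 4 * (2 * j + 1) ≤ (2 * j)! ^ 2 := by
  induction j with
  | zero => simp
  | succ j ih =>
    rw [show 2 * (j + 1) - 1 = 2 * j + 1 by omega, Nat.doubleFactorial_add_one,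
      show 2 * (j + 1) = 2 * j + 1 + 1 by ring, Nat.factorial_succ, Nat.factorial_succ]
    have hpoly : (2 * j + 1) * (2 * j + 3) ≤ (2 * j + 2) ^ 2 := by nlinarith
    calc ((2 * j + 1) * (2 * j - 1)‼) ^ 4 * (2 * j + 1 + 1 + 1)
        = (2 * j + 1) ^ 2 * ((2 * j + 1) * (2 * j + 3)) * ((2 * j - 1)‼ ^ 4 * (2 * j + 1)) := by
          ring
      _ ≤ (2 * j + 1) ^ 2 * (2 * j + 2) ^ 2 * (2 * j)! ^ 2 := by gcongr
      _ = _ := by ring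

theorem doubleFactorial_mul_choose_pow_four_le (B : ℝ) (j m : ℕ) :
    (((2 * j - 1)‼ : ℝ) * ((2 * j + m).choose m) * B ^ m) ^ 4 * 16 ^ m * (2 * j + m : ℕ)
      ≤ rexp (32 * B ^ 4) * 4 ^ (2 * j + m) * ((2 * j + m)! : ℝ) ^ 2 := by
  have hD : ((2 * j - 1)‼ : ℝ) ^ 4 * (2 * j + 1) ≤ ((2 * j)! : ℝ) ^ 2 := by
    exact_mod_cast doubleFactorial_pow_four_mul_le j
  have hfac : ((2 * j + m).choose m : ℝ) * (2 * j)! * m ! = (2 * j + m)! := by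
    exact_mod_cast Nat.add_choose_mul_factorial_mul_factorial (2 * j) m
  have hchoose : ((2 * j + m).choose m : ℝ) ^ 2 ≤ 4 ^ (2 * j + m) := by
    calc ((2 * j + m).choose m : ℝ) ^ 2 ≤ ((2 : ℝ) ^ (2 * j + m)) ^ 2 := by
          gcongr; exact_mod_cast Nat.choose_le_two_pow _ _
      _ = 4 ^ (2 * j + m) := by rw [← pow_mul, mul_comm, pow_mul]; norm_num
  set n := 2 * j + m
  set D : ℝ := ↑(2 * j - 1)‼
  set Cc : ℝ := ↑(n.choose m)
  have hn : (n : ℝ) ≤ (m + 1) * (2 * j + 1) := by push_cast [n]; nlinarith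
  have hm : (m + 1 : ℝ) ≤ 2 ^ m := by exact_mod_cast Nat.lt_two_pow_self
  have hfac_sq : (m ! : ℝ) ≤ (m ! : ℝ) ^ 2 := by
    have : (1 : ℝ) ≤ m ! := by exact_mod_cast Nat.one_le_iff_ne_zero.2 m.factorial_ne_zero
    nlinarith
  have hE : (32 * B ^ 4) ^ m ≤ rexp (32 * B ^ 4) * m ! :=
    (div_le_iff₀ (by positivity)).1 (pow_div_factorial_le_exp _ (by positivity) m)
  refine le_of_mul_le_mul_right ?_ (by positivity : (0 : ℝ) < (2 * j + 1) * (m ! : ℝ) ^ 2)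
  calc (D * Cc * B ^ m) ^ 4 * 16 ^ m * n * ((2 * j + 1) * (m ! : ℝ) ^ 2)
      = (D ^ 4 * (2 * j + 1)) * Cc ^ 4 * (m ! : ℝ) ^ 2 * (16 * B ^ 4) ^ m * n := by ring
    _ ≤ ((2 * j)! : ℝ) ^ 2 * Cc ^ 4 * (m ! : ℝ) ^ 2 * (16 * B ^ 4) ^ m * n := by gcongr
    _ = Cc ^ 2 * (n ! : ℝ) ^ 2 * (16 * B ^ 4) ^ m * n := by rw [← hfac]; ring
    _ ≤ 4 ^ n * (n ! : ℝ) ^ 2 * (16 * B ^ 4) ^ m * ((m + 1) * (2 * j + 1)) := by gcongr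
    _ ≤ 4 ^ n * (n ! : ℝ) ^ 2 * (16 * B ^ 4) ^ m * (2 ^ m * (2 * j + 1)) := by gcongr
    _ = 4 ^ n * (n ! : ℝ) ^ 2 * (32 * B ^ 4) ^ m * (2 * j + 1) := by
      rw [show (32 : ℝ) * B ^ 4 = 16 * B ^ 4 * 2 by ring, mul_pow (16 * B ^ 4) 2 m]; ring
    _ ≤ 4 ^ n * (n ! : ℝ) ^ 2 * (rexp (32 * B ^ 4) * (m ! : ℝ) ^ 2) * (2 * j + 1) := by
      gcongr; exact hE.trans (by gcongr)
    _ = rexp (32 * B ^ 4) * 4 ^ n * (n ! : ℝ) ^ 2 * ((2 * j + 1) * (m ! : ℝ) ^ 2) := by ring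

theorem le_half_pow_mul_of_pow_four_le {x K : ℝ} (hK : 0 ≤ K) {n m : ℕ} (hn : 1 ≤ n)
    (h : x ^ 4 * 16 ^ m * n ≤ K ^ 4 * 4 ^ n * (n ! : ℝ) ^ 2) :
    x ≤ (1 / 2) ^ m * (K * √2 ^ n * (n ! : ℝ) ^ (1 / 2 : ℝ) / (n : ℝ) ^ (1 / 4 : ℝ)) := by
  have hn0 : (0 : ℝ) < n := by exact_mod_cast hn
  have hfac : ((n ! : ℝ) ^ (1 / 2 : ℝ)) ^ 4 = (n ! : ℝ) ^ 2 := by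
    rw [← Real.rpow_natCast, ← Real.rpow_mul (by positivity)]; norm_num
  have hroot : ((n : ℝ) ^ (1 / 4 : ℝ)) ^ 4 = n := by
    rw [← Real.rpow_natCast, ← Real.rpow_mul hn0.le]; norm_num
  have hsqrt : (√2 ^ n) ^ 4 = (4 : ℝ) ^ n := by
    rw [← pow_mul, mul_comm, pow_mul, show √2 ^ 4 = (4 : ℝ) by
      rw [show 4 = 2 * 2 by rfl, pow_mul, Real.sq_sqrt (by norm_num)]; norm_num]
  have hpow : ((1 / 2) ^ m * (K * √2 ^ n * (n ! : ℝ) ^ (1 / 2 : ℝ) / (n : ℝ) ^ (1 / 4 : ℝ))) ^ 4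
      = K ^ 4 * 4 ^ n * (n ! : ℝ) ^ 2 / (16 ^ m * n) := by
    rw [show ((1 / 2) ^ m * (K * √2 ^ n * (n ! : ℝ) ^ (1 / 2 : ℝ) / (n : ℝ) ^ (1 / 4 : ℝ))) ^ 4
        = ((1 / 2) ^ m) ^ 4 * K ^ 4 * (√2 ^ n) ^ 4 * ((n ! : ℝ) ^ (1 / 2 : ℝ)) ^ 4
          / ((n : ℝ) ^ (1 / 4 : ℝ)) ^ 4 by ring, hfac, hroot, hsqrt, ← pow_mul, mul_comm m, pow_mul]
    field_simp
    rw [mul_right_comm, ← mul_pow]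
    norm_num
  refine le_of_pow_le_pow_left₀ (n := 4) (by norm_num) (by positivity) ?_
  rwa [hpow, le_div_iff₀ (by positivity), ← mul_assoc]

theorem norm_coeff_hermite_mul_pow_le (B : ℝ) {n : ℕ} (hn : 1 ≤ n) (m : ℕ) :
    ‖(hermite n).coeff m‖ * B ^ m ≤
      (1 / 2) ^ m * (rexp (8 * B ^ 4) * √2 ^ n * (n ! : ℝ) ^ (1 / 2 : ℝ) / (n : ℝ) ^ (1 / 4 : ℝ)) := by
  by_cases hnm : ∃ j, n = 2 * j + m
  · obtain ⟨j, rfl⟩ := hnm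
    refine le_half_pow_mul_of_pow_four_le (exp_pos _).le hn ?_
    rw [coeff_hermite_explicit, ← Real.exp_nat_mul]
    convert doubleFactorial_mul_choose_pow_four_le B j m using 3
    · simp
    · push_cast; ring_nf
  · have hzero : (hermite n).coeff m = 0 := by
      rcases lt_or_ge n m with hlt | hle
      · exact coeff_hermite_of_lt hlt
      · refine coeff_hermite_of_odd_add (Nat.not_even_iff_odd.1 fun heven => hnm ?_)
        obtain ⟨j, hj⟩ := (Nat.even_sub hle).2 (Nat.even_add.1 heven)
        exact ⟨j, by omega⟩
    rw [hzero, norm_zero, zero_mul]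
    positivity

theorem sum_norm_coeff_hermite_mul_pow_le (B : ℝ) {n : ℕ} (hn : 1 ≤ n) :
    ∑ m ∈ Finset.range (n + 1), ‖(hermite n).coeff m‖ * B ^ m ≤
      2 * (rexp (8 * B ^ 4) * √2 ^ n * (n ! : ℝ) ^ (1 / 2 : ℝ) / (n : ℝ) ^ (1 / 4 : ℝ)) := by
  calc ∑ m ∈ Finset.range (n + 1), ‖(hermite n).coeff m‖ * B ^ m
      ≤ ∑ m ∈ Finset.range (n + 1), (1 / 2) ^ m *
          (rexp (8 * B ^ 4) * √2 ^ n * (n ! : ℝ) ^ (1 / 2 : ℝ) / (n : ℝ) ^ (1 / 4 : ℝ)) :=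
        Finset.sum_le_sum fun m _ => norm_coeff_hermite_mul_pow_le B hn m
    _ ≤ _ := by
      rw [← Finset.sum_mul]
      gcongr
      exact sum_geometric_two_le _

theorem gaussian_kernel_gevrey_general (t : ℝ) (ht : t ≠ 0) (L : ℝ) :
    ∃ C : ℝ, 0 < C ∧
      ∀ (k : ℕ), 1 ≤ k → ∀ x ∈ Icc (-L) L,
        ‖iteratedDeriv k
            (fun x : ℝ => Complex.exp (Complex.I * (x : ℂ) ^ 2 / (4 * (t : ℂ)))) x‖
          ≤ C * (Nat.factorial k : ℝ) ^ ((1 : ℝ) / 2) /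
              ((k : ℝ) ^ ((1 : ℝ) / 4) * (Real.sqrt |t|) ^ k) := by
  obtain ⟨c, hc⟩ := IsAlgClosed.exists_pow_nat_eq (-(Complex.I / (2 * t))) two_pos
  have hc_norm : ‖c‖ = 1 / (√2 * √|t|) := by
    have hsq : ‖c‖ ^ 2 = (1 / (√2 * √|t|)) ^ 2 := by
      rw [← norm_pow, hc, div_pow, mul_pow, Real.sq_sqrt (by norm_num), Real.sq_sqrt (abs_nonneg t)]
      simp
    exact (pow_left_inj₀ (norm_nonneg c) (by positivity) two_ne_zero).1 hsq
  have hgauss : (fun x : ℝ => Complex.exp (Complex.I * (x : ℂ) ^ 2 / (4 * (t : ℂ))))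
      = fun y : ℝ => cexp (-(c * y) ^ 2 / 2) := by
    ext y
    rw [mul_pow, hc]
    congr 1
    ring
  refine ⟨2 * rexp (8 * (‖c‖ * L) ^ 4), by positivity, fun k hk x hx => ?_⟩
  rw [hgauss]
  calc _ ≤ ‖c‖ ^ k * ∑ m ∈ Finset.range (k + 1), ‖(hermite k).coeff m‖ * (‖c‖ * L) ^ m :=
        norm_iteratedDeriv_cexp_neg_sq_half_le (by simp [hc, Complex.div_re]) k (abs_le.2 hx)
    _ ≤ ‖c‖ ^ k * (2 * (rexp (8 * (‖c‖ * L) ^ 4) * √2 ^ k * (k ! : ℝ) ^ (1 / 2 : ℝ)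
          / (k : ℝ) ^ (1 / 4 : ℝ))) := by
        gcongr
        exact sum_norm_coeff_hermite_mul_pow_le _ hk
    _ = _ := by
        have : √|t| ≠ 0 := by positivity
        rw [hc_norm, div_pow, one_pow, mul_pow]
        field_simp

theorem gaussian_kernel_gevrey (t : ℝ) (ht : t ≠ 0) (L : ℝ) (hL : 0 < L) :
    ∃ C : ℝ, 0 < C ∧
      ∀ (k : ℕ), 1 ≤ k → ∀ x ∈ Icc (-L) L,
        ‖iteratedDeriv k
            (fun x : ℝ => Complex.exp (Complex.I * (x : ℂ) ^ 2 / (4 * (t : ℂ)))) x‖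
          ≤ C * (Nat.factorial k : ℝ) ^ ((1 : ℝ) / 2) /
              ((k : ℝ) ^ ((1 : ℝ) / 4) * (Real.sqrt |t|) ^ k) :=
  gaussian_kernel_gevrey_general t ht L
end

section
/- Let E(t,x) = (4πit)^{−1/2} e^{i x²/(4t)} and let v₀ ∈ L¹(ℝ) be supported in [−1,1]. Then v(t,x) = ∫_{−1}^{1} E(t, x−y) v₀(y) dy satisfies, for all 0 < t₁ ≤ t ≤ t₂, all x ∈ [−L, L], and all k, l ≥ 0: |∂_x^k ∂_t^l v(t,x)| ≤ C · (k!)^{1/2}/R₁^k · l!/R₂^l · ‖v₀‖_{L¹}, for constants C, R₁, R₂ > 0 depending only on t₁, t₂, L. In particular v is Gevrey of order 1 in t and 1/2 in x on [t₁,t₂] × [−L,L]. -/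
/-!
Continue `v` holomorphically to complex time `σ`, `Re σ > 0`, and complex position `ζ`. For
`Re σ ≥ a > 0` the continuation grows at most like `exp (|ζ|² / (2a))`, so Cauchy's estimate on the
circle of radius `√(k+1)` around `x` gives `|∂_ζ^k v(σ, x)| ≤ C √(k!) R^{-k}`, the balance
`k! / √(k+1)^k ≤ √(k!)` being the source of the Gevrey order `1/2`. The function
`σ ↦ ∂_ζ^k v(σ, x)` is again holomorphic (Cauchy's integral formula in `ζ`, then differentiation
under the integral sign in `σ`), and Cauchy's estimate on the circle of radius `t₁/4` around `t`
gives the factor `l! / (t₁/4)^l`.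
-/

open Real Set Complex MeasureTheory intervalIntegral

open Filter Topology Metric Function
open scoped Interval

theorem aestronglyMeasurable_deriv_of_eventually {𝕜 E α : Type*} [NontriviallyNormedField 𝕜]
    [NormedAddCommGroup E] [NormedSpace 𝕜 E] [MeasurableSpace α] {μ : Measure α}
    {g : 𝕜 → α → E} {x₀ : 𝕜}
    (hg : ∀ᶠ x in 𝓝 x₀, AEStronglyMeasurable (g x) μ)
    (hd : ∀ᵐ y ∂μ, DifferentiableAt 𝕜 (fun s => g s y) x₀) :
    AEStronglyMeasurable (fun y => deriv (fun s => g s y) x₀) μ := by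
  obtain ⟨t, ht⟩ := exists_seq_tendsto (𝓝[≠] (0 : 𝕜))
  have hshift : Tendsto (fun n => x₀ + t n) atTop (𝓝 x₀) := by
    simpa using tendsto_const_nhds.add (tendsto_nhdsWithin_iff.1 ht).1
  obtain ⟨N, hN⟩ := eventually_atTop.1 (hshift.eventually hg)
  -- the derivative is the pointwise limit of measurable difference quotients
  refine aestronglyMeasurable_of_tendsto_ae atTop
    (f := fun n y => (t (n + N))⁻¹ • (g (x₀ + t (n + N)) y - g x₀ y))
    (fun n => ((hN _ le_add_self).sub (hg.self_of_nhds)).const_smul _) ?_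
  filter_upwards [hd] with y hy
  exact hy.hasDerivAt.tendsto_slope_zero.comp (ht.comp (tendsto_add_atTop_nat N))

section ComplexParameter

variable {E : Type*} [NormedAddCommGroup E] [NormedSpace ℂ E] {a b : ℝ} {v : ℝ → ℂ}

theorem continuousOn_intervalIntegral_smul {X : Type*} [TopologicalSpace X]
    [LocallyCompactSpace X] [FirstCountableTopology X] {U : Set X} (hU : IsOpen U) {g : X → ℝ → E}
    (hv : IntervalIntegrable v volume a b) (hg : ContinuousOn (uncurry g) (U ×ˢ [[a, b]])) :
    ContinuousOn (fun p => ∫ y in a..b, v y • g p y) U := by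
  intro p₀ hp₀
  obtain ⟨K, hK, hp₀K, hKU⟩ := exists_compact_subset hU hp₀
  obtain ⟨M, hM⟩ := (hK.prod isCompact_uIcc).exists_bound_of_continuousOn
    (hg.mono (prod_mono hKU subset_rfl))
  refine (continuousAt_of_dominated_interval (bound := fun y => ‖v y‖ * M) ?_ ?_
    (hv.norm.mul_const M) ?_).continuousWithinAt
  · filter_upwards [hU.mem_nhds hp₀] with p hp
    exact (intervalIntegrable_iff.1 (hv.smul_continuousOn (hg.uncurry_left p hp))).1
  · filter_upwards [mem_interior_iff_mem_nhds.1 hp₀K] with p hp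
    refine ae_of_all _ fun y hy => ?_
    rw [norm_smul]
    exact mul_le_mul_of_nonneg_left (hM (p, y) ⟨hp, uIoc_subset_uIcc hy⟩) (norm_nonneg _)
  · refine ae_of_all _ fun y hy => ?_
    exact (((hg.uncurry_right y (uIoc_subset_uIcc hy)).continuousAt
      (hU.mem_nhds hp₀)).const_smul (v y))

theorem differentiableOn_intervalIntegral_smul [CompleteSpace E] {U : Set ℂ} (hU : IsOpen U)
    {g : ℂ → ℝ → E} (hv : IntervalIntegrable v volume a b)
    (hg : ContinuousOn (uncurry g) (U ×ˢ [[a, b]]))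
    (hgd : ∀ y ∈ [[a, b]], DifferentiableOn ℂ (fun s => g s y) U) :
    DifferentiableOn ℂ (fun σ => ∫ y in a..b, v y • g σ y) U := by
  intro σ₀ hσ₀
  obtain ⟨r, hr, hrU⟩ : ∃ r > 0, closedBall σ₀ (2 * r) ⊆ U := by
    obtain ⟨ε, hε, hεU⟩ := nhds_basis_closedBall.mem_iff.1 (hU.mem_nhds hσ₀)
    exact ⟨ε / 2, by positivity, by rwa [mul_div_cancel₀ _ two_ne_zero]⟩
  have hball : ball σ₀ r ⊆ U :=
    (ball_subset_closedBall.trans (closedBall_subset_closedBall (by linarith))).trans hrU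
  obtain ⟨M, hM⟩ := ((isCompact_closedBall σ₀ (2 * r)).prod
    isCompact_uIcc).exists_bound_of_continuousOn (hg.mono (prod_mono hrU subset_rfl))
  -- Cauchy's estimate on circles of radius `r` bounds the `σ`-derivatives uniformly
  have hderiv : ∀ y ∈ [[a, b]], ∀ σ ∈ ball σ₀ r, ‖deriv (fun s => g s y) σ‖ ≤ M / r := by
    intro y hy σ hσ
    have hsub : closedBall σ r ⊆ closedBall σ₀ (2 * r) := by
      refine closedBall_subset_closedBall' ?_
      rw [mem_ball] at hσ
      linarith
    refine norm_deriv_le_of_forall_mem_sphere_norm_le hr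
      ((hgd y hy).diffContOnCl_ball (hsub.trans hrU)) fun z hz => ?_
    exact hM (z, y) ⟨hsub (sphere_subset_closedBall hz), hy⟩
  have hdiff : ∀ y ∈ [[a, b]], ∀ σ ∈ ball σ₀ r,
      HasDerivAt (fun s => g s y) (deriv (fun s => g s y) σ) σ := fun y hy σ hσ =>
    ((hgd y hy).differentiableAt (hU.mem_nhds (hball hσ))).hasDerivAt
  have hmeas : ∀ σ ∈ U, AEStronglyMeasurable (g σ) (volume.restrict (Ι a b)) := fun σ hσ =>
    ((hg.uncurry_left σ hσ).mono uIoc_subset_uIcc).aestronglyMeasurable measurableSet_uIoc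
  have key := hasDerivAt_integral_of_dominated_loc_of_deriv_le
    (F := fun σ y => v y • g σ y) (F' := fun σ y => v y • deriv (fun s => g s y) σ)
    (bound := fun y => ‖v y‖ * (M / r)) (ball_mem_nhds σ₀ hr)
    (eventually_of_mem (hU.mem_nhds hσ₀) fun σ hσ =>
      (intervalIntegrable_iff.1 hv).1.smul (hmeas σ hσ))
    (hv.smul_continuousOn (hg.uncurry_left σ₀ hσ₀))
    ((intervalIntegrable_iff.1 hv).1.smul (aestronglyMeasurable_deriv_of_eventually
      (eventually_of_mem (hU.mem_nhds hσ₀) hmeas)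
      ((ae_restrict_mem measurableSet_uIoc).mono fun y hy =>
        (hdiff y (uIoc_subset_uIcc hy) σ₀ (mem_ball_self hr)).differentiableAt)))
    (ae_of_all _ fun y hy σ hσ => by
      rw [norm_smul]
      exact mul_le_mul_of_nonneg_left (hderiv y (uIoc_subset_uIcc hy) σ hσ) (norm_nonneg _))
    (hv.norm.mul_const _)
    (ae_of_all _ fun y hy σ hσ => (hdiff y (uIoc_subset_uIcc hy) σ hσ).const_smul (v y))
  exact key.2.differentiableAt.differentiableWithinAt

theorem differentiableOn_iteratedDeriv_of_separately [CompleteSpace E] {U : Set ℂ}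
    (hU : IsOpen U) {F : ℂ → ℂ → E} {c : ℂ} {r : ℝ} (hr : 0 < r)
    (hF : ContinuousOn (uncurry F) (U ×ˢ closedBall c r))
    (hFσ : ∀ ζ ∈ closedBall c r, DifferentiableOn ℂ (fun σ => F σ ζ) U)
    (hFζ : ∀ σ ∈ U, DifferentiableOn ℂ (F σ) (closedBall c r)) (n : ℕ) :
    DifferentiableOn ℂ (fun σ => iteratedDeriv n (F σ) c) U := by
  set w : ℝ → ℂ := fun θ => deriv (circleMap c r) θ * (1 / (circleMap c r θ - c) ^ (n + 1))
  have hw : Continuous w := by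
    simp only [w, deriv_circleMap, circleMap_sub_center]
    exact ((continuous_circleMap 0 r).mul continuous_const).mul (continuous_const.div
      ((continuous_circleMap 0 r).pow _) fun θ => pow_ne_zero _ (circleMap_ne_center hr.ne'))
  have hcauchy : ∀ σ ∈ U, iteratedDeriv n (F σ) c =
      (2 * π * I / n.factorial)⁻¹ • ∫ θ in 0..2 * π, w θ • F σ (circleMap c r θ) := by
    intro σ hσ
    have hne : (2 * π * I / n.factorial) ≠ 0 := by simp [Nat.factorial_ne_zero]
    rw [eq_inv_smul_iff₀ hne, ← (hFζ σ hσ).circleIntegral_one_div_sub_center_pow_smul hr n,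
      circleIntegral]
    simp only [w, mul_smul]
  refine DifferentiableOn.congr (DifferentiableOn.const_smul ?_ _) hcauchy
  refine differentiableOn_intervalIntegral_smul hU (hw.intervalIntegrable _ _) ?_
    fun θ _ => hFσ _ (circleMap_mem_closedBall c hr.le θ)
  exact hF.comp (continuousOn_fst.prodMk
    ((continuous_circleMap c r).comp continuous_snd).continuousOn)
    fun p hp => ⟨hp.1, circleMap_mem_closedBall c hr.le p.2⟩

theorem norm_iteratedDeriv_le_of_norm_le_mul_exp_sq [CompleteSpace E] {f : ℂ → E}
    (hf : Differentiable ℂ f) {A B : ℝ} (hB : 0 ≤ B)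
    (hfA : ∀ ζ, ‖f ζ‖ ≤ A * rexp (B * ‖ζ‖ ^ 2)) (c : ℂ) (k : ℕ) :
    ‖iteratedDeriv k f c‖ ≤
      A * rexp (2 * B * (‖c‖ ^ 2 + 1)) * rexp (2 * B) ^ k * √(k.factorial : ℝ) := by
  -- Cauchy's estimate on the circle of radius `s = √(k+1)`, where `k!/s^k ≤ √k!`
  set s := √((k : ℝ) + 1)
  have hs : 0 < s := by positivity
  have hs2 : s ^ 2 = k + 1 := Real.sq_sqrt (by positivity)
  have hA : 0 ≤ A := nonneg_of_mul_nonneg_left ((norm_nonneg _).trans (hfA c)) (exp_pos _)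
  have hsphere : ∀ ζ ∈ sphere c s, ‖f ζ‖ ≤ A * rexp (2 * B * (‖c‖ ^ 2 + 1) + k * (2 * B)) := by
    intro ζ hζ
    have hζc : ‖ζ‖ ≤ ‖c‖ + s := by
      simpa [mem_sphere_iff_norm.1 hζ] using norm_le_norm_add_norm_sub' ζ c
    have hsq : ‖ζ‖ ^ 2 ≤ 2 * (‖c‖ ^ 2 + 1) + 2 * k := by
      nlinarith [norm_nonneg ζ, sq_nonneg (‖c‖ - s)]
    refine (hfA ζ).trans ?_
    gcongr
    nlinarith
  have hsqrt : √(k.factorial : ℝ) ≤ s ^ k := by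
    have hfac : k.factorial ≤ (k + 1) ^ k :=
      (Nat.factorial_le_pow k).trans (Nat.pow_le_pow_left k.le_succ k)
    rw [Real.sqrt_le_iff, ← pow_mul, mul_comm, pow_mul, hs2]
    exact ⟨by positivity, by exact_mod_cast hfac⟩
  have hM : 0 ≤ A * rexp (2 * B * (‖c‖ ^ 2 + 1) + k * (2 * B)) := by positivity
  calc ‖iteratedDeriv k f c‖
      ≤ k.factorial * (A * rexp (2 * B * (‖c‖ ^ 2 + 1) + k * (2 * B))) / s ^ k :=
        norm_iteratedDeriv_le_of_forall_mem_sphere_norm_le k hs hf.diffContOnCl hsphere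
    _ ≤ A * rexp (2 * B * (‖c‖ ^ 2 + 1) + k * (2 * B)) * √(k.factorial : ℝ) := by
        rw [div_le_iff₀ (by positivity)]
        calc (k.factorial : ℝ) * _ = _ * √(k.factorial : ℝ) * √(k.factorial : ℝ) := by
              rw [mul_assoc _ √(k.factorial : ℝ), Real.mul_self_sqrt (Nat.cast_nonneg _),
                mul_comm]
          _ ≤ _ := mul_le_mul_of_nonneg_left hsqrt (by positivity)
    _ = _ := by rw [Real.exp_add, Real.exp_nat_mul]; ring

end ComplexParameter

theorem iteratedDeriv_comp_ofReal {f : ℂ → ℂ} {U : Set ℂ} (hU : IsOpen U)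
    (hf : DifferentiableOn ℂ f U) (n : ℕ) {x : ℝ} (hx : (x : ℂ) ∈ U) :
    iteratedDeriv n (fun t : ℝ => f t) x = iteratedDeriv n f x := by
  induction n generalizing f with
  | zero => simp
  | succ n ih =>
    have hderiv : deriv (fun t : ℝ => f t) =ᶠ[𝓝 x] fun t : ℝ => deriv f t := by
      filter_upwards [continuous_ofReal.continuousAt.preimage_mem_nhds (hU.mem_nhds hx)]
        with t ht
      exact ((hf.differentiableAt (hU.mem_nhds ht)).hasDerivAt.comp_ofReal).deriv
    rw [iteratedDeriv_succ', iteratedDeriv_succ', hderiv.iteratedDeriv_eq, ih (hf.deriv hU)]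

theorem re_sub_le_of_mem_closedBall {c σ : ℂ} {r : ℝ} (h : σ ∈ closedBall c r) :
    c.re - r ≤ σ.re := by
  have := (abs_le.1 ((abs_re_le_norm (σ - c)).trans (mem_closedBall_iff_norm.1 h))).1
  rw [sub_re] at this
  linarith

theorem four_pi_I_mul_mem_slitPlane {σ : ℂ} (hσ : 0 < σ.re) : 4 * π * I * σ ∈ slitPlane := by
  refine mem_slitPlane_iff.2 (Or.inr ?_)
  simp only [mul_im, mul_re, I_re, I_im, ofReal_re, ofReal_im]
  norm_num
  positivity

/-- The kernel `E(σ, w)` of the statement at complex time `σ`, with the principal branch of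
`(4π i σ)^{-1/2}`. -/
noncomputable def schrodingerKernel (σ w : ℂ) : ℂ :=
  (4 * π * I * σ) ^ (-(1 / 2 : ℂ)) * cexp (I * w ^ 2 / (4 * σ))

theorem continuousOn_schrodingerKernel :
    ContinuousOn (uncurry schrodingerKernel) {p : ℂ × ℂ | 0 < p.1.re} := by
  intro p hp
  have hp0 : p.1 ≠ 0 := fun h => by simp [h] at hp
  refine ContinuousAt.continuousWithinAt (ContinuousAt.mul ?_ ?_)
  · exact (continuousAt_cpow_const (four_pi_I_mul_mem_slitPlane hp)).comp
      (f := fun q : ℂ × ℂ => 4 * π * I * q.1) (by fun_prop)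
  · fun_prop (disch := simpa using hp0)

theorem differentiableOn_schrodingerKernel_left (w : ℂ) :
    DifferentiableOn ℂ (fun σ => schrodingerKernel σ w) {σ | 0 < σ.re} := by
  intro σ hσ
  have hσ0 : σ ≠ 0 := fun h => by simp [h] at hσ
  refine DifferentiableAt.differentiableWithinAt (DifferentiableAt.mul ?_ ?_)
  · exact (by fun_prop : DifferentiableAt ℂ (fun σ : ℂ => 4 * π * I * σ) σ).cpow_const
      (four_pi_I_mul_mem_slitPlane hσ)
  · fun_prop (disch := simpa using hσ0)

theorem differentiable_schrodingerKernel_right (σ : ℂ) :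
    Differentiable ℂ (schrodingerKernel σ) := by
  unfold schrodingerKernel
  fun_prop

theorem norm_schrodingerKernel_le {a : ℝ} (ha : 0 < a) {σ : ℂ} (hσ : a ≤ σ.re) (w : ℂ) :
    ‖schrodingerKernel σ w‖ ≤ (4 * π * a) ^ (-(1 / 2) : ℝ) * rexp (‖w‖ ^ 2 / (4 * a)) := by
  have haσ : a ≤ ‖σ‖ := hσ.trans (re_le_norm σ)
  have hpow : ‖(4 * π * I * σ) ^ (-(1 / 2 : ℂ))‖ ≤ (4 * π * a) ^ (-(1 / 2) : ℝ) := by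
    rw [show (-(1 / 2 : ℂ)) = ((-(1 / 2) : ℝ) : ℂ) by norm_num, norm_cpow_real]
    refine Real.rpow_le_rpow_of_nonpos (by positivity) ?_ (by norm_num)
    simp only [norm_mul, Complex.norm_ofNat, norm_real, Real.norm_eq_abs, abs_of_pos pi_pos,
      norm_I]
    nlinarith [pi_pos]
  have hexp : ‖cexp (I * w ^ 2 / (4 * σ))‖ ≤ rexp (‖w‖ ^ 2 / (4 * a)) := by
    rw [norm_exp]
    refine exp_le_exp.2 ((re_le_norm _).trans ?_)
    simp only [norm_div, norm_mul, norm_I, norm_pow, Complex.norm_ofNat, one_mul]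
    gcongr
  unfold schrodingerKernel
  rw [norm_mul]
  exact mul_le_mul hpow hexp (norm_nonneg _) (by positivity)

/-- The solution `v(σ, ζ)` of the statement at complex time `σ` and complex position `ζ`. -/
noncomputable def schrodingerSolution (v₀ : ℝ → ℂ) (σ ζ : ℂ) : ℂ :=
  ∫ y in (-1 : ℝ)..1, schrodingerKernel σ (ζ - y) * v₀ y

section Solution

variable {v₀ : ℝ → ℂ}

theorem schrodingerSolution_eq_integral_smul : schrodingerSolution v₀ =
    fun σ ζ => ∫ y in (-1 : ℝ)..1, v₀ y • schrodingerKernel σ (ζ - y) := by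
  ext σ ζ
  simp only [schrodingerSolution, smul_eq_mul, mul_comm]

theorem differentiable_schrodingerSolution_right (hv : IntervalIntegrable v₀ volume (-1) 1)
    (σ : ℂ) : Differentiable ℂ (schrodingerSolution v₀ σ) := by
  have hK := differentiable_schrodingerKernel_right σ
  rw [← differentiableOn_univ, schrodingerSolution_eq_integral_smul]
  refine differentiableOn_intervalIntegral_smul isOpen_univ hv ?_
    fun y _ => (hK.comp (differentiable_id.sub_const _)).differentiableOn
  exact (hK.continuous.comp
    (continuous_fst.sub (continuous_ofReal.comp continuous_snd))).continuousOn

theorem differentiableOn_schrodingerSolution_left (hv : IntervalIntegrable v₀ volume (-1) 1)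
    (ζ : ℂ) : DifferentiableOn ℂ (fun σ => schrodingerSolution v₀ σ ζ) {σ | 0 < σ.re} := by
  rw [schrodingerSolution_eq_integral_smul]
  refine differentiableOn_intervalIntegral_smul (isOpen_lt continuous_const continuous_re) hv ?_
    fun y _ => differentiableOn_schrodingerKernel_left _
  exact continuousOn_schrodingerKernel.comp (f := fun p : ℂ × ℝ => (p.1, ζ - (p.2 : ℂ)))
    (by fun_prop) fun p hp => hp.1

theorem continuousOn_schrodingerSolution (hv : IntervalIntegrable v₀ volume (-1) 1) :
    ContinuousOn (uncurry (schrodingerSolution v₀)) {p : ℂ × ℂ | 0 < p.1.re} := by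
  rw [schrodingerSolution_eq_integral_smul]
  refine continuousOn_intervalIntegral_smul
    (isOpen_lt continuous_const (continuous_re.comp continuous_fst)) hv ?_
  exact continuousOn_schrodingerKernel.comp
    (f := fun p : (ℂ × ℂ) × ℝ => (p.1.1, p.1.2 - (p.2 : ℂ))) (by fun_prop) fun p hp => hp.1

theorem norm_schrodingerSolution_le (hv : Integrable v₀) {a : ℝ} (ha : 0 < a) {σ : ℂ}
    (hσ : a ≤ σ.re) (ζ : ℂ) :
    ‖schrodingerSolution v₀ σ ζ‖ ≤ (4 * π * a) ^ (-(1 / 2) : ℝ) * rexp (1 / (2 * a)) *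
      (∫ y, ‖v₀ y‖) * rexp (1 / (2 * a) * ‖ζ‖ ^ 2) := by
  set A := (4 * π * a) ^ (-(1 / 2) : ℝ) * rexp (1 / (2 * a)) * rexp (1 / (2 * a) * ‖ζ‖ ^ 2)
    with hA
  have hkernel : ∀ y ∈ Ioc (-1 : ℝ) 1, ‖schrodingerKernel σ (ζ - y)‖ ≤ A := by
    intro y hy
    have hζy : ‖ζ - y‖ ≤ ‖ζ‖ + 1 := (norm_sub_le _ _).trans (by
      simpa [abs_le] using ⟨hy.1.le, hy.2⟩)
    refine (norm_schrodingerKernel_le ha hσ _).trans ?_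
    rw [hA, mul_assoc _ (rexp _), ← Real.exp_add]
    gcongr
    have hsq : ‖ζ - y‖ ^ 2 ≤ 2 * (1 + ‖ζ‖ ^ 2) := by
      nlinarith [norm_nonneg (ζ - y), sq_nonneg (‖ζ‖ - 1)]
    calc ‖ζ - y‖ ^ 2 / (4 * a) ≤ 2 * (1 + ‖ζ‖ ^ 2) / (4 * a) := by gcongr
      _ = _ := by field_simp; ring
  calc ‖schrodingerSolution v₀ σ ζ‖ ≤ ∫ y in (-1 : ℝ)..1, A * ‖v₀ y‖ := by
        refine norm_integral_le_of_norm_le (by norm_num) (ae_of_all _ fun y hy => ?_)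
          (hv.norm.intervalIntegrable.const_mul A)
        rw [norm_mul]
        exact mul_le_mul_of_nonneg_right (hkernel y hy) (norm_nonneg _)
    _ ≤ A * ∫ y, ‖v₀ y‖ := by
        rw [intervalIntegral.integral_const_mul, integral_of_le (by norm_num)]
        exact mul_le_mul_of_nonneg_left
          (setIntegral_le_integral hv.norm (ae_of_all _ fun y => norm_nonneg _)) (by positivity)
    _ = _ := by ring

theorem differentiableOn_iteratedDeriv_schrodingerSolution
    (hv : IntervalIntegrable v₀ volume (-1) 1) (k : ℕ) (c : ℂ) :
    DifferentiableOn ℂ (fun σ => iteratedDeriv k (schrodingerSolution v₀ σ) c)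
      {σ | 0 < σ.re} :=
  differentiableOn_iteratedDeriv_of_separately (isOpen_lt continuous_const continuous_re)
    one_pos ((continuousOn_schrodingerSolution hv).mono fun _ hp => hp.1)
    (fun ζ _ => differentiableOn_schrodingerSolution_left hv ζ)
    (fun σ _ => (differentiable_schrodingerSolution_right hv σ).differentiableOn) k

theorem iteratedDeriv_iteratedDeriv_schrodingerSolution_ofReal
    (hv : IntervalIntegrable v₀ volume (-1) 1) (k l : ℕ) {t : ℝ} (ht : 0 < t) (x : ℝ) :
    iteratedDeriv l (fun τ : ℝ => iteratedDeriv k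
      (fun ξ : ℝ => schrodingerSolution v₀ τ ξ) x) t =
      iteratedDeriv l (fun σ => iteratedDeriv k (schrodingerSolution v₀ σ) x) t := by
  rw [← iteratedDeriv_comp_ofReal (isOpen_lt continuous_const continuous_re)
    (differentiableOn_iteratedDeriv_schrodingerSolution hv k x) l (by simpa using ht)]
  refine EventuallyEq.iteratedDeriv_eq l (Eventually.of_forall fun τ => ?_)
  exact iteratedDeriv_comp_ofReal isOpen_univ
    (differentiable_schrodingerSolution_right hv _).differentiableOn k (mem_univ _)

theorem norm_iteratedDeriv_schrodingerSolution_le (hv : Integrable v₀) {a : ℝ} (ha : 0 < a)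
    {σ : ℂ} (hσ : a ≤ σ.re) {c : ℂ} {L : ℝ} (hc : ‖c‖ ≤ L) (k : ℕ) :
    ‖iteratedDeriv k (schrodingerSolution v₀ σ) c‖ ≤
      (4 * π * a) ^ (-(1 / 2) : ℝ) * rexp (1 / (2 * a)) * (∫ y, ‖v₀ y‖) *
        rexp (1 / a * (L ^ 2 + 1)) * rexp (1 / a) ^ k * √(k.factorial : ℝ) := by
  refine (norm_iteratedDeriv_le_of_norm_le_mul_exp_sq
    (differentiable_schrodingerSolution_right hv.intervalIntegrable σ) (by positivity)
    (norm_schrodingerSolution_le hv ha hσ) c k).trans ?_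
  rw [show 2 * (1 / (2 * a)) = 1 / a by field_simp]
  gcongr

end Solution

theorem lemma1_kernel_gevrey_general (v₀ : ℝ → ℂ)
    (hint : Integrable v₀) :
    ∀ t₁ t₂ L : ℝ, 0 < t₁ → t₁ ≤ t₂ → 0 < L →
      ∃ C R₁ R₂ : ℝ, 0 < C ∧ 0 < R₁ ∧ 0 < R₂ ∧
        ∀ (k l : ℕ), ∀ t ∈ Icc t₁ t₂, ∀ x ∈ Icc (-L) L,
          ‖iteratedDeriv l
              (fun τ : ℝ => iteratedDeriv k
                (fun ξ : ℝ => ∫ y in (-1 : ℝ)..1,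
                  (4 * Real.pi * Complex.I * (τ : ℂ)) ^ (-(1 / 2 : ℂ)) *
                    Complex.exp (Complex.I * ((ξ : ℂ) - (y : ℂ)) ^ 2 / (4 * (τ : ℂ))) *
                      v₀ y) x) t‖
            ≤ C * ((Nat.factorial k : ℝ) ^ ((1 : ℝ) / 2) / R₁ ^ k) *
                ((Nat.factorial l : ℝ) / R₂ ^ l) * ∫ y, ‖v₀ y‖ := by
  intro t₁ t₂ L ht₁ _ _
  set a := t₁ / 2 with ha_def
  have ha : 0 < a := by positivity
  have hv : IntervalIntegrable v₀ volume (-1) 1 := hint.intervalIntegrable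
  refine ⟨(4 * π * a) ^ (-(1 / 2) : ℝ) * rexp (1 / (2 * a)) * rexp (1 / a * (L ^ 2 + 1)),
    (rexp (1 / a))⁻¹, t₁ / 4, by positivity, by positivity, by positivity,
    fun k l t ht x hx => ?_⟩
  have hball : closedBall (t : ℂ) (t₁ / 4) ⊆ {σ | a ≤ σ.re} := fun σ hσ => by
    have := re_sub_le_of_mem_closedBall hσ
    simp only [ofReal_re] at this
    exact (show a ≤ σ.re by linarith [ht.1])
  have hxL : ‖(x : ℂ)‖ ≤ L := by rw [norm_real, Real.norm_eq_abs, abs_le]; exact hx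
  change ‖iteratedDeriv l (fun τ : ℝ => iteratedDeriv k
      (fun ξ : ℝ => schrodingerSolution v₀ τ ξ) x) t‖ ≤ _
  rw [iteratedDeriv_iteratedDeriv_schrodingerSolution_ofReal hv k l (ht₁.trans_le ht.1) x]
  refine (norm_iteratedDeriv_le_of_forall_mem_sphere_norm_le l (by positivity)
    ((differentiableOn_iteratedDeriv_schrodingerSolution hv k x).diffContOnCl_ball
      fun σ hσ => ha.trans_le (hball hσ))
    fun σ hσ => norm_iteratedDeriv_schrodingerSolution_le hint ha
      (hball (sphere_subset_closedBall hσ)) hxL k).trans (le_of_eq ?_)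
  rw [Real.sqrt_eq_rpow, inv_pow, div_inv_eq_mul]
  ring

theorem lemma1_kernel_gevrey (v₀ : ℝ → ℂ)
    (hint : Integrable v₀)
    (hsupp : ∀ x : ℝ, x ∉ Icc (-1 : ℝ) 1 → v₀ x = 0) :
    ∀ t₁ t₂ L : ℝ, 0 < t₁ → t₁ ≤ t₂ → 0 < L →
      ∃ C R₁ R₂ : ℝ, 0 < C ∧ 0 < R₁ ∧ 0 < R₂ ∧
        ∀ (k l : ℕ), ∀ t ∈ Icc t₁ t₂, ∀ x ∈ Icc (-L) L,
          ‖iteratedDeriv l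
              (fun τ : ℝ => iteratedDeriv k
                (fun ξ : ℝ => ∫ y in (-1 : ℝ)..1,
                  (4 * Real.pi * Complex.I * (τ : ℂ)) ^ (-(1 / 2 : ℂ)) *
                    Complex.exp (Complex.I * ((ξ : ℂ) - (y : ℂ)) ^ 2 / (4 * (τ : ℂ))) *
                      v₀ y) x) t‖
            ≤ C * ((Nat.factorial k : ℝ) ^ ((1 : ℝ) / 2) / R₁ ^ k) *
                ((Nat.factorial l : ℝ) / R₂ ^ l) * ∫ y, ‖v₀ y‖ :=
  lemma1_kernel_gevrey_general v₀ hint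
end

section
/- Let s ∈ [0,2), and let y be Gevrey of order s on [t₁,t₂] with |y^(k)(t)| ≤ M (k!)^s / R^k. Then the series u(t) = Σ_{k≥0} (−i)^k y^(k)(t) / (2k+1)! converges absolutely and uniformly on [t₁,t₂], and u is Gevrey of order s on [t₁,t₂]. -/
open Real Set Complex Filter

private lemma aux_choose_le_two_pow (n k : ℕ) : n.choose k ≤ 2 ^ n := by
  rcases le_or_gt k n with h | h
  · calc n.choose k ≤ ∑ m ∈ Finset.range (n + 1), n.choose m :=
        Finset.single_le_sum (fun i _ => Nat.zero_le _)
          (Finset.mem_range.mpr (Nat.lt_succ_of_le h))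
    _ = 2 ^ n := Nat.sum_range_choose n
  · simp [Nat.choose_eq_zero_of_lt h]

/-- The terms of the flatness series, with `p` extra derivatives. -/
noncomputable def Fk (y : ℝ → ℂ) (p k : ℕ) (t : ℝ) : ℂ :=
  (-Complex.I) ^ k * iteratedDeriv (k + p) y t / (Nat.factorial (2 * k + 1) : ℂ)

/-- The sum of the flatness series, with `p` extra derivatives. -/
noncomputable def Gp (y : ℝ → ℂ) (p : ℕ) (t : ℝ) : ℂ := ∑' k : ℕ, Fk y p k t

private lemma aux_term_bound {s M R : ℝ} (hs0 : 0 ≤ s) (hM : 0 ≤ M) (hR : 0 < R) (p k : ℕ) :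
    M * (Nat.factorial (k + p) : ℝ) ^ s / R ^ (k + p) / (Nat.factorial (2 * k + 1) : ℝ)
      ≤ M * (Nat.factorial p : ℝ) ^ s * ((2 : ℝ) ^ s / R) ^ p *
        (((2 : ℝ) ^ s / R) ^ k * (Nat.factorial k : ℝ) ^ (s - 2)) := by
  have hK : (0 : ℝ) < (Nat.factorial k : ℝ) := by exact_mod_cast Nat.factorial_pos k
  have hP : (0 : ℝ) < (Nat.factorial p : ℝ) := by exact_mod_cast Nat.factorial_pos p
  have hD : (0 : ℝ) < (Nat.factorial (2 * k + 1) : ℝ) := by exact_mod_cast Nat.factorial_pos _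
  have h2 : (0 : ℝ) < (2 : ℝ) ^ s := Real.rpow_pos_of_pos two_pos s
  have hnat : ((Nat.factorial (k + p) : ℕ) : ℝ)
      ≤ (2 : ℝ) ^ (k + p) * ((Nat.factorial k : ℝ) * (Nat.factorial p : ℝ)) := by
    have h1 : Nat.factorial (k + p) ≤ 2 ^ (k + p) * (Nat.factorial k * Nat.factorial p) := by
      calc Nat.factorial (k + p)
          = (k + p).choose k * Nat.factorial k * Nat.factorial p := by
            rw [← Nat.choose_mul_factorial_mul_factorial (Nat.le_add_right k p),
              Nat.add_sub_cancel_left]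
        _ ≤ 2 ^ (k + p) * (Nat.factorial k * Nat.factorial p) := by
            rw [mul_assoc]
            exact Nat.mul_le_mul_right _ (aux_choose_le_two_pow _ _)
    exact_mod_cast h1
  have hAs : ((Nat.factorial (k + p) : ℝ)) ^ s
      ≤ ((2 : ℝ) ^ s) ^ (k + p) * ((Nat.factorial k : ℝ) ^ s * (Nat.factorial p : ℝ) ^ s) := by
    calc ((Nat.factorial (k + p) : ℝ)) ^ s
        ≤ ((2 : ℝ) ^ (k + p) * ((Nat.factorial k : ℝ) * (Nat.factorial p : ℝ))) ^ s :=
          Real.rpow_le_rpow (by positivity) hnat hs0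
      _ = ((2 : ℝ) ^ s) ^ (k + p) * ((Nat.factorial k : ℝ) ^ s * (Nat.factorial p : ℝ) ^ s) := by
          rw [Real.mul_rpow (by positivity) (by positivity),
            Real.mul_rpow hK.le hP.le]
          congr 1
          rw [← Real.rpow_natCast ((2 : ℝ) ^ s) (k + p), ← Real.rpow_natCast (2 : ℝ) (k + p),
            ← Real.rpow_mul (by norm_num), ← Real.rpow_mul (by norm_num), mul_comm]
  have hfac2 : (Nat.factorial k : ℝ) * (Nat.factorial k : ℝ)
      ≤ (Nat.factorial (2 * k + 1) : ℝ) := by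
    have h1 : Nat.factorial k * Nat.factorial k ≤ Nat.factorial (2 * k + 1) := by
      calc Nat.factorial k * Nat.factorial k ≤ Nat.factorial (k + k) :=
            Nat.le_of_dvd (Nat.factorial_pos _) (Nat.factorial_mul_factorial_dvd_factorial_add k k)
        _ ≤ Nat.factorial (2 * k + 1) := Nat.factorial_le (by omega)
    exact_mod_cast h1
  have h2K : (Nat.factorial k : ℝ) ^ (2 : ℝ) = (Nat.factorial k : ℝ) * (Nat.factorial k : ℝ) := by
    rw [show (2 : ℝ) = ((2 : ℕ) : ℝ) by norm_num, Real.rpow_natCast]; ring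
  calc M * (Nat.factorial (k + p) : ℝ) ^ s / R ^ (k + p) / (Nat.factorial (2 * k + 1) : ℝ)
      = M * (Nat.factorial (k + p) : ℝ) ^ s
        / (R ^ (k + p) * (Nat.factorial (2 * k + 1) : ℝ)) := by rw [div_div]
    _ ≤ M * (((2 : ℝ) ^ s) ^ (k + p) * ((Nat.factorial k : ℝ) ^ s * (Nat.factorial p : ℝ) ^ s))
        / (R ^ (k + p) * ((Nat.factorial k : ℝ) * (Nat.factorial k : ℝ))) := by
        refine div_le_div₀ (by positivity) (mul_le_mul_of_nonneg_left hAs hM) (by positivity) ?_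
        exact mul_le_mul_of_nonneg_left hfac2 (by positivity)
    _ = M * (Nat.factorial p : ℝ) ^ s * ((2 : ℝ) ^ s / R) ^ p *
        (((2 : ℝ) ^ s / R) ^ k * (Nat.factorial k : ℝ) ^ (s - 2)) := by
        rw [Real.rpow_sub hK, h2K, div_pow, div_pow]
        field_simp
        ring

private lemma aux_lip_boundary {h h' : ℝ → ℂ} {O : Set ℝ} (hO : Convex ℝ O) {C e : ℝ}
    (hd : ∀ x ∈ O, HasDerivAt h (h' x) x) (hb : ∀ x ∈ O, ‖h' x‖ ≤ C)
    (hne : (nhdsWithin e O).NeBot)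
    (hcont : Filter.Tendsto h (nhdsWithin e O) (nhds (h e))) :
    ∀ t ∈ O, ‖h t - h e‖ ≤ C * |t - e| := by
  intro t htO
  haveI := hne
  have key : ∀ x ∈ O, ‖h t - h x‖ ≤ C * |t - x| := by
    intro x hx
    have := hO.norm_image_sub_le_of_norm_hasDerivWithin_le
      (fun z hz => (hd z hz).hasDerivWithinAt) hb hx htO
    simpa [Real.norm_eq_abs] using this
  have h1 : Tendsto (fun x => ‖h t - h x‖) (nhdsWithin e O) (nhds ‖h t - h e‖) :=
    (tendsto_const_nhds.sub hcont).norm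
  have h2 : Tendsto (fun x : ℝ => C * |t - x|) (nhdsWithin e O) (nhds (C * |t - e|)) := by
    have hid : Tendsto (fun x : ℝ => x) (nhdsWithin e O) (nhds e) :=
      tendsto_id.mono_left nhdsWithin_le_nhds
    exact ((tendsto_const_nhds.sub hid).abs).const_mul C
  refine le_of_tendsto_of_tendsto h1 h2 ?_
  filter_upwards [self_mem_nhdsWithin] with x hx
  exact key x hx

private lemma aux_endpoint_bound {φ h : ℝ → ℂ} {O : Set ℝ} {e C : ℝ} (hC : 0 ≤ C)
    (hne : (nhdsWithin e O).NeBot) (heO : e ∉ O)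
    (heq : ∀ t ∈ O, φ t = h t)
    (hcont : Filter.Tendsto h (nhdsWithin e O) (nhds (h e)))
    (hlip : ∀ t ∈ O, ‖h t - h e‖ ≤ C * |t - e|) :
    ‖deriv φ e‖ ≤ C := by
  by_cases hd : DifferentiableAt ℝ φ e
  · haveI := hne
    have hee : ∀ᶠ t in nhdsWithin e O, φ t = h t := by
      filter_upwards [self_mem_nhdsWithin] with t ht using heq t ht
    have hφe : φ e = h e := by
      have h1 : Tendsto φ (nhdsWithin e O) (nhds (φ e)) :=
        hd.continuousAt.tendsto.mono_left nhdsWithin_le_nhds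
      have h2 : Tendsto φ (nhdsWithin e O) (nhds (h e)) :=
        hcont.congr' (hee.mono fun t ht => ht.symm)
      exact tendsto_nhds_unique h1 h2
    have hsub : O ⊆ {e}ᶜ := by
      intro x hx
      simp only [Set.mem_compl_iff, Set.mem_singleton_iff]
      rintro rfl; exact heO hx
    have hslope : Tendsto (slope φ e) (nhdsWithin e O) (nhds (deriv φ e)) :=
      (hasDerivAt_iff_tendsto_slope.mp hd.hasDerivAt).mono_left (nhdsWithin_mono e hsub)
    refine le_of_tendsto hslope.norm ?_
    filter_upwards [self_mem_nhdsWithin] with t ht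
    have hte : t ≠ e := fun hh => heO (hh ▸ ht)
    have hsl : slope φ e t = (t - e)⁻¹ • (h t - h e) := by
      simp only [slope, vsub_eq_sub, heq t ht, hφe]
    rw [hsl, norm_smul, Real.norm_eq_abs, abs_inv]
    have habs : 0 < |t - e| := abs_pos.mpr (sub_ne_zero.mpr hte)
    calc |t - e|⁻¹ * ‖h t - h e‖ ≤ |t - e|⁻¹ * (C * |t - e|) :=
          mul_le_mul_of_nonneg_left (hlip t ht) (inv_nonneg.mpr habs.le)
      _ = C := by field_simp
  · rw [deriv_zero_of_not_differentiableAt hd]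
    simpa using hC

theorem control_gevrey (s M R t₁ t₂ : ℝ) (hs0 : 0 ≤ s) (hs2 : s < 2)
    (hM : 0 < M) (hR : 0 < R) (ht : t₁ < t₂) (y : ℝ → ℂ)
    (hy : ContDiff ℝ (⊤ : ℕ∞) y)
    (hbd : ∀ (k : ℕ) (t : ℝ), t ∈ Icc t₁ t₂ →
      ‖iteratedDeriv k y t‖ ≤ M * (Nat.factorial k : ℝ) ^ s / R ^ k) :
    (∀ t ∈ Icc t₁ t₂, Summable (fun k : ℕ =>
      ‖(-Complex.I) ^ k * iteratedDeriv k y t / (Nat.factorial (2 * k + 1) : ℂ)‖)) ∧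
    ∃ M' R' : ℝ, 0 < M' ∧ 0 < R' ∧
      ∀ (p : ℕ), ∀ t ∈ Icc t₁ t₂,
        ‖iteratedDeriv p
            (fun t : ℝ => ∑' k : ℕ,
              (-Complex.I) ^ k * iteratedDeriv k y t / (Nat.factorial (2 * k + 1) : ℂ)) t‖
          ≤ M' * (Nat.factorial p : ℝ) ^ s / R' ^ p := by
  have h2s : (0 : ℝ) < (2 : ℝ) ^ s := Real.rpow_pos_of_pos two_pos s
  set Q : ℝ := (2 : ℝ) ^ s / R with hQdef
  have hQ : 0 < Q := div_pos h2s hR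
  set a : ℕ → ℝ := fun k => Q ^ k * (Nat.factorial k : ℝ) ^ (s - 2) with ha_def
  have ha_pos : ∀ k, 0 < a k := fun k =>
    mul_pos (pow_pos hQ k)
      (Real.rpow_pos_of_pos (by exact_mod_cast Nat.factorial_pos k) _)
  -- summability of `a` via ratio test
  have ha : Summable a := by
    refine summable_of_ratio_norm_eventually_le (show (1:ℝ)/2 < 1 by norm_num) ?_
    have h1 : Tendsto (fun k : ℕ => ((k : ℝ) + 1) ^ (s - 2)) atTop (nhds 0) := by
      have h0 := tendsto_rpow_neg_atTop (y := 2 - s) (by linarith)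
      have h2 : Tendsto (fun k : ℕ => ((k : ℝ) + 1)) atTop atTop :=
        tendsto_atTop_add_const_right atTop 1 tendsto_natCast_atTop_atTop
      have := h0.comp h2
      simpa [neg_sub, Function.comp_def] using this
    filter_upwards [h1.eventually_lt_const (show (0:ℝ) < 1 / (2 * Q) by positivity)] with k hk
    have hstep : a (k + 1) = (Q * ((k : ℝ) + 1) ^ (s - 2)) * a k := by
      have hfac : ((Nat.factorial (k + 1) : ℝ)) = ((k : ℝ) + 1) * (Nat.factorial k : ℝ) := by
        push_cast [Nat.factorial_succ]; ring
      simp only [ha_def, pow_succ, hfac,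
        Real.mul_rpow (by positivity : (0:ℝ) ≤ (k:ℝ)+1)
          (by positivity : (0:ℝ) ≤ (Nat.factorial k : ℝ))]
      ring
    rw [Real.norm_of_nonneg (ha_pos _).le, Real.norm_of_nonneg (ha_pos _).le, hstep]
    have hco : Q * ((k : ℝ) + 1) ^ (s - 2) ≤ 1 / 2 := by
      calc Q * ((k : ℝ) + 1) ^ (s - 2) ≤ Q * (1 / (2 * Q)) :=
            mul_le_mul_of_nonneg_left hk.le hQ.le
        _ = 1 / 2 := by field_simp
    exact mul_le_mul_of_nonneg_right hco (ha_pos k).le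
  set Ca : ℝ := ∑' k, a k with hCa_def
  have hCa : 0 < Ca := Summable.tsum_pos ha (fun i => (ha_pos i).le) 0 (ha_pos 0)
  -- the comparison series
  set v : ℕ → ℕ → ℝ := fun p k => M * (Nat.factorial p : ℝ) ^ s * Q ^ p * a k with hv_def
  have hv : ∀ p, Summable (v p) := fun p => ha.mul_left _
  -- bound on the terms
  have hFv : ∀ p k, ∀ t ∈ Icc t₁ t₂, ‖Fk y p k t‖ ≤ v p k := by
    intro p k t htI
    have hnorm : ‖Fk y p k t‖
        = ‖iteratedDeriv (k + p) y t‖ / (Nat.factorial (2 * k + 1) : ℝ) := by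
      rw [Fk, norm_div, norm_mul, norm_pow, norm_neg, Complex.norm_I, one_pow, one_mul,
        Complex.norm_natCast]
    rw [hnorm]
    calc ‖iteratedDeriv (k + p) y t‖ / (Nat.factorial (2 * k + 1) : ℝ)
        ≤ (M * (Nat.factorial (k + p) : ℝ) ^ s / R ^ (k + p))
          / (Nat.factorial (2 * k + 1) : ℝ) := by
          gcongr
          exact hbd (k + p) t htI
      _ ≤ v p k := by
          simpa [hv_def, ha_def, hQdef, mul_assoc] using
            aux_term_bound hs0 hM.le hR p k
  -- differentiability of the individual terms
  have hyd : ∀ m : ℕ, Differentiable ℝ (iteratedDeriv m y) := fun m =>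
    hy.differentiable_iteratedDeriv m (WithTop.coe_lt_coe.mpr (ENat.coe_lt_top m))
  have hFd : ∀ p k t, HasDerivAt (Fk y p k) (Fk y (p + 1) k t) t := by
    intro p k t
    have h1 : HasDerivAt (iteratedDeriv (k + p) y) (iteratedDeriv (k + p + 1) y t) t := by
      rw [iteratedDeriv_succ]
      exact ((hyd (k + p)) t).hasDerivAt
    exact (h1.const_mul ((-Complex.I) ^ k)).div_const ((Nat.factorial (2 * k + 1) : ℂ))
  -- summability on the interval
  have hsumF : ∀ p, ∀ t ∈ Icc t₁ t₂, Summable (fun k => ‖Fk y p k t‖) := by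
    intro p t htI
    exact Summable.of_nonneg_of_le (fun k => norm_nonneg _) (fun k => hFv p k t htI) (hv p)
  -- bound on the sums
  have hGb : ∀ p, ∀ t ∈ Icc t₁ t₂, ‖Gp y p t‖ ≤ M * Ca * (Nat.factorial p : ℝ) ^ s * Q ^ p := by
    intro p t htI
    calc ‖Gp y p t‖ ≤ ∑' k, ‖Fk y p k t‖ := norm_tsum_le_tsum_norm (hsumF p t htI)
      _ ≤ ∑' k, v p k := Summable.tsum_le_tsum (fun k => hFv p k t htI) (hsumF p t htI) (hv p)
      _ = M * (Nat.factorial p : ℝ) ^ s * Q ^ p * Ca := by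
          simp only [hv_def]; rw [tsum_mul_left]
      _ = M * Ca * (Nat.factorial p : ℝ) ^ s * Q ^ p := by ring
  -- derivative of the sums in the open interval
  have hm₀ : (t₁ + t₂) / 2 ∈ Ioo t₁ t₂ := ⟨by linarith, by linarith⟩
  have hGd : ∀ p, ∀ t ∈ Ioo t₁ t₂, HasDerivAt (Gp y p) (Gp y (p + 1) t) t := by
    intro p t htO
    exact hasDerivAt_tsum_of_isPreconnected (hv (p + 1)) isOpen_Ioo
      (convex_Ioo t₁ t₂).isPreconnected
      (fun k x _ => hFd p k x)
      (fun k x hx => hFv (p + 1) k x (Ioo_subset_Icc_self hx))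
      hm₀ ((hsumF p _ (Ioo_subset_Icc_self hm₀)).of_norm) htO
  -- continuity of the sums on the closed interval
  have hGcont : ∀ p, ContinuousOn (Gp y p) (Icc t₁ t₂) := by
    intro p
    refine continuousOn_tsum (fun k => Continuous.continuousOn ?_) (hv p)
      (fun k x hx => hFv p k x hx)
    exact (continuous_const.mul ((hyd (k + p)).continuous)).div_const _
  -- identification of iterated derivatives on the open interval
  have hB : ∀ p, ∀ t ∈ Ioo t₁ t₂, iteratedDeriv p (Gp y 0) t = Gp y p t := by
    intro p
    induction p with
    | zero => intro t _; simp [iteratedDeriv_zero]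
    | succ q ih =>
      intro t htO
      rw [iteratedDeriv_succ]
      have hev : iteratedDeriv q (Gp y 0) =ᶠ[nhds t] Gp y q :=
        Filter.eventuallyEq_of_mem (isOpen_Ioo.mem_nhds htO) (fun x hx => ih x hx)
      rw [hev.deriv_eq]
      exact (hGd q t htO).deriv
  -- endpoint (and in fact all-point) bound
  have hmain : ∀ p, ∀ t ∈ Icc t₁ t₂,
      ‖iteratedDeriv p (Gp y 0) t‖ ≤ M * Ca * (Nat.factorial p : ℝ) ^ s * Q ^ p := by
    intro p t htI
    by_cases htO : t ∈ Ioo t₁ t₂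
    · rw [hB p t htO]
      exact hGb p t htI
    · have hne : (nhdsWithin t (Ioo t₁ t₂)).NeBot := by
        refine mem_closure_iff_nhdsWithin_neBot.mp ?_
        rw [closure_Ioo ht.ne]
        exact htI
      match p with
      | 0 =>
        rw [iteratedDeriv_zero]
        simpa using hGb 0 t htI
      | (q + 1) =>
        rw [iteratedDeriv_succ]
        have hcont : Tendsto (Gp y q) (nhdsWithin t (Ioo t₁ t₂)) (nhds (Gp y q t)) :=
          ((hGcont q) t htI).mono_left (nhdsWithin_mono _ Ioo_subset_Icc_self)
        have hCpos : (0:ℝ) ≤ M * Ca * (Nat.factorial (q + 1) : ℝ) ^ s * Q ^ (q + 1) := by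
          have hfp : (0:ℝ) < (Nat.factorial (q + 1) : ℝ) := by
            exact_mod_cast Nat.factorial_pos _
          have := Real.rpow_pos_of_pos hfp s
          positivity
        exact aux_endpoint_bound hCpos hne htO (hB q) hcont
          (aux_lip_boundary (convex_Ioo _ _) (fun x hx => hGd q x hx)
            (fun x hx => hGb (q + 1) x (Ioo_subset_Icc_self hx)) hne hcont)
  constructor
  · intro t htI
    exact hsumF 0 t htI
  · refine ⟨M * Ca, Q⁻¹, mul_pos hM hCa, inv_pos.mpr hQ, ?_⟩
    intro p t htI
    have heq : M * Ca * (Nat.factorial p : ℝ) ^ s / (Q⁻¹) ^ p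
        = M * Ca * (Nat.factorial p : ℝ) ^ s * Q ^ p := by
      rw [inv_pow]; field_simp
    rw [heq]
    exact hmain p t htI
end
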